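/- arXiv:q-alg/9706007 — 7 statements merged into one kernel-verified Lean document; each statement's English description precedes it below -/
import Mathlib

section
/- Let k be a field, H a Hopf algebra over k, and R a universal R-matrix on H. Then (S⊗id)(R)·R = 1 = R·(S⊗id)(R), i.e. (S⊗id)(R) = R⁻¹ in the algebra H⊗H, and moreover (S⊗S)(R) = R, where S⊗id and S⊗S denote the linear maps of H⊗H induced by applying the antipode to the indicated tensor factors. -/
open scoped TensorProduct

noncomputable section

variable (k H : Type*) [Field k] [Ring H] [HopfAlgebra k H]

/-- The comultiplication as an algebra map. -/
abbrev Δ : H →ₐ[k] H ⊗[k] H := Bialgebra.comulAlgHom k H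

/-- The flip `x ⊗ y ↦ y ⊗ x` of the tensor square, as an algebra map. -/
abbrev τ : H ⊗[k] H →ₐ[k] H ⊗[k] H := (Algebra.TensorProduct.comm k H H).toAlgHom

/-- `x ⊗ y ↦ x ⊗ y ⊗ 1`. -/
abbrev ι₁₂ : H ⊗[k] H →ₐ[k] H ⊗[k] (H ⊗[k] H) :=
  Algebra.TensorProduct.map (AlgHom.id k H) Algebra.TensorProduct.includeLeft

/-- `x ⊗ y ↦ x ⊗ 1 ⊗ y`. -/
abbrev ι₁₃ : H ⊗[k] H →ₐ[k] H ⊗[k] (H ⊗[k] H) :=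
  Algebra.TensorProduct.map (AlgHom.id k H) Algebra.TensorProduct.includeRight

/-- `x ⊗ y ↦ 1 ⊗ x ⊗ y`. -/
abbrev ι₂₃ : H ⊗[k] H →ₐ[k] H ⊗[k] (H ⊗[k] H) :=
  Algebra.TensorProduct.includeRight

/-- `id ⊗ Δ`. -/
abbrev idΔ : H ⊗[k] H →ₐ[k] H ⊗[k] (H ⊗[k] H) :=
  Algebra.TensorProduct.map (AlgHom.id k H) (Bialgebra.comulAlgHom k H)

/-- `Δ ⊗ id` (re-associated to land in `H ⊗ (H ⊗ H)`). -/
abbrev Δid : H ⊗[k] H →ₐ[k] H ⊗[k] (H ⊗[k] H) :=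
  (Algebra.TensorProduct.assoc k k k H H H).toAlgHom.comp
    (Algebra.TensorProduct.map (Bialgebra.comulAlgHom k H) (AlgHom.id k H))

/-- `R` is a universal R-matrix (quasitriangular structure) on `H`. -/
def IsUnivRMatrix (R : H ⊗[k] H) : Prop :=
  IsUnit R ∧
  (∀ h : H, R * τ k H (Δ k H h) = Δ k H h * R) ∧
  idΔ k H R = ι₁₃ k H R * ι₁₂ k H R ∧
  Δid k H R = ι₁₃ k H R * ι₂₃ k H R

/-- `ε ⊗ id : H ⊗ H → H`, `x ⊗ y ↦ ε(x)·y`. -/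
abbrev εid : H ⊗[k] H →ₐ[k] H :=
  (Algebra.TensorProduct.lid k H).toAlgHom.comp
    (Algebra.TensorProduct.map (Bialgebra.counitAlgHom k H) (AlgHom.id k H))

/-- `id ⊗ ε : H ⊗ H → H`, `x ⊗ y ↦ ε(y)·x`. -/
abbrev idε : H ⊗[k] H →ₐ[k] H :=
  ((Algebra.TensorProduct.rid k k H).toAlgHom.restrictScalars k).comp
    (Algebra.TensorProduct.map (AlgHom.id k H) (Bialgebra.counitAlgHom k H))

/-- `S ⊗ id : H ⊗ H → H ⊗ H`. -/
abbrev Sid : H ⊗[k] H →ₗ[k] H ⊗[k] H :=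
  LinearMap.rTensor H (HopfAlgebra.antipode (R := k))

/-- `S ⊗ S : H ⊗ H → H ⊗ H`. -/
abbrev SS : H ⊗[k] H →ₗ[k] H ⊗[k] H :=
  TensorProduct.map (HopfAlgebra.antipode (R := k)) (HopfAlgebra.antipode (R := k))

/-- The Markov element `u = μ((S ⊗ id)(τ(R)))` of a bivector `R`. -/
def markov (R : H ⊗[k] H) : H :=
  LinearMap.mul' k H (Sid k H ((TensorProduct.comm k H H) R))

/-- `(id ⊗ l)(R)` : applying a linear functional to the second tensor factor. -/
def evR (l : H →ₗ[k] k) : H ⊗[k] H →ₗ[k] H :=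
  (TensorProduct.rid k H).toLinearMap ∘ₗ LinearMap.lTensor H l

/-- `(l ⊗ id)(R)` : applying a linear functional to the first tensor factor. -/
def evL (l : H →ₗ[k] k) : H ⊗[k] H →ₗ[k] H :=
  (TensorProduct.lid k H).toLinearMap ∘ₗ LinearMap.rTensor H l

/-- The subspace `H_l = {(id ⊗ l)(R) : l ∈ H*}`. -/
def Hl (R : H ⊗[k] H) : Set H := Set.range fun l : H →ₗ[k] k => evR k H l R

/-- The subspace `H_r = {(l ⊗ id)(R) : l ∈ H*}`. -/
def Hr (R : H ⊗[k] H) : Set H := Set.range fun l : H →ₗ[k] k => evL k H l R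

/-- `H` is cocommutative: `τ ∘ Δ = Δ`. -/
def IsCocomm : Prop :=
  ∀ x : H, (TensorProduct.comm k H H) (Coalgebra.comul (R := k) x) = Coalgebra.comul x

/-- The adjoint action `x ↦ x^h = Σ h₍₁₎ · x · S(h₍₂₎)` of `h`, as an endomorphism of `H`. -/
def adEnd (h : H) : H →ₗ[k] H :=
  TensorProduct.lift
    (LinearMap.mk₂ k
      (fun a b => LinearMap.mulRight k (HopfAlgebra.antipode (R := k) b) ∘ₗ
        LinearMap.mulLeft k a)
      (fun a a' b => by ext x; simp [add_mul])
      (fun c a b => by ext x; simp [smul_mul_assoc])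
      (fun a b b' => by ext x; simp [mul_add])
      (fun c a b => by ext x; simp [mul_smul_comm]))
    (Coalgebra.comul h)


/-! Applying `x ⊗ y ⊗ z ↦ S(x) y ⊗ z` to `(Δ ⊗ id)(R) = R₁₃ R₂₃` turns the left side into
`1 ⊗ (ε ⊗ id)(R)` by the antipode axiom and the right side into `(S ⊗ id)(R) · R`. Applying
`ε ⊗ id` shows that `(ε ⊗ id)(R)` is an idempotent unit, hence `1`, so `(S ⊗ id)(R) = R⁻¹`.
Inverting `(id ⊗ Δ)(R) = R₁₃ R₁₂` gives `(id ⊗ Δ)(R⁻¹) = R⁻¹₁₂ R⁻¹₁₃`, and the mirror argument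
with `x ⊗ y ⊗ z ↦ x ⊗ y S(z)` shows that `(id ⊗ S)(R⁻¹)` is inverse to `R⁻¹`, i.e.
`(S ⊗ S)(R) = (id ⊗ S)(R⁻¹) = R`. -/

section UnivRMatrix

variable {k H : Type*} [Field k] [Ring H] [HopfAlgebra k H]

local notation "S" => HopfAlgebra.antipode (R := k) (A := H)

variable (k H) in
def antipodeMul₁₂ : H ⊗[k] (H ⊗[k] H) →ₗ[k] H ⊗[k] H :=
  LinearMap.rTensor H (LinearMap.mul' k H ∘ₗ LinearMap.rTensor H S) ∘ₗ
    (TensorProduct.assoc k H H H).symm.toLinearMap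

variable (k H) in
def mulAntipode₂₃ : H ⊗[k] (H ⊗[k] H) →ₗ[k] H ⊗[k] H :=
  LinearMap.lTensor H (LinearMap.mul' k H ∘ₗ LinearMap.lTensor H S)

@[simp] lemma antipodeMul₁₂_tmul (x y z : H) :
    antipodeMul₁₂ k H (x ⊗ₜ (y ⊗ₜ z)) = (S x * y) ⊗ₜ z := by
  simp [antipodeMul₁₂]

@[simp] lemma mulAntipode₂₃_tmul (x y z : H) :
    mulAntipode₂₃ k H (x ⊗ₜ (y ⊗ₜ z)) = x ⊗ₜ (y * S z) := by
  simp [mulAntipode₂₃]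

lemma antipodeMul₁₂_ι₁₃_mul_ι₂₃ (u v : H ⊗[k] H) :
    antipodeMul₁₂ k H (ι₁₃ k H u * ι₂₃ k H v) = Sid k H u * v := by
  induction u using TensorProduct.induction_on with
  | zero => simp
  | add u u' hu hu' => simp only [map_add, add_mul, hu, hu']
  | tmul x y =>
    induction v using TensorProduct.induction_on with
    | zero => simp
    | add v v' hv hv' => simp only [map_add, mul_add, hv, hv']
    | tmul a b => simp [Algebra.TensorProduct.tmul_mul_tmul]

lemma mulAntipode₂₃_ι₁₂_mul_ι₁₃ (u v : H ⊗[k] H) :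
    mulAntipode₂₃ k H (ι₁₂ k H u * ι₁₃ k H v) = u * LinearMap.lTensor H S v := by
  induction u using TensorProduct.induction_on with
  | zero => simp
  | add u u' hu hu' => simp only [map_add, add_mul, hu, hu']
  | tmul x y =>
    induction v using TensorProduct.induction_on with
    | zero => simp
    | add v v' hv hv' => simp only [map_add, mul_add, hv, hv']
    | tmul a b => simp [Algebra.TensorProduct.tmul_mul_tmul]

lemma antipodeMul₁₂_Δid (w : H ⊗[k] H) :
    antipodeMul₁₂ k H (Δid k H w) = 1 ⊗ₜ εid k H w := by
  induction w using TensorProduct.induction_on with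
  | zero => simp
  | add w w' hw hw' => simp only [map_add, hw, hw', TensorProduct.tmul_add]
  | tmul x y =>
    have hcontract : antipodeMul₁₂ k H (Δid k H (x ⊗ₜ y)) =
        LinearMap.mul' k H (LinearMap.rTensor H S (Coalgebra.comul x)) ⊗ₜ y := by
      change LinearMap.rTensor H _ ((TensorProduct.assoc k H H H).symm
        (TensorProduct.assoc k H H H (Coalgebra.comul x ⊗ₜ y))) = _
      rw [LinearEquiv.symm_apply_apply, LinearMap.rTensor_tmul]
      rfl
    rw [hcontract, HopfAlgebra.mul_antipode_rTensor_comul_apply]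
    simp [Algebra.algebraMap_eq_smul_one, TensorProduct.smul_tmul]

lemma mulAntipode₂₃_idΔ (w : H ⊗[k] H) :
    mulAntipode₂₃ k H (idΔ k H w) = idε k H w ⊗ₜ 1 := by
  induction w using TensorProduct.induction_on with
  | zero => simp
  | add w w' hw hw' => simp only [map_add, hw, hw', TensorProduct.add_tmul]
  | tmul x y =>
    change x ⊗ₜ LinearMap.mul' k H (LinearMap.lTensor H S (Coalgebra.comul y)) = _
    rw [HopfAlgebra.mul_antipode_lTensor_comul_apply]
    simp [Algebra.algebraMap_eq_smul_one, TensorProduct.smul_tmul]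

lemma εid_Sid (w : H ⊗[k] H) : εid k H (Sid k H w) = εid k H w := by
  induction w using TensorProduct.induction_on with
  | zero => simp
  | add w w' hw hw' => simp only [map_add, hw, hw']
  | tmul x y => simp

lemma idε_lTensor_antipode (w : H ⊗[k] H) :
    idε k H (LinearMap.lTensor H S w) = idε k H w := by
  induction w using TensorProduct.induction_on with
  | zero => simp
  | add w w' hw hw' => simp only [map_add, hw, hw']
  | tmul x y => simp

lemma Sid_mul_self_of_Δid {R : H ⊗[k] H} (hR : IsUnit R)
    (hΔ : Δid k H R = ι₁₃ k H R * ι₂₃ k H R) : Sid k H R * R = 1 := by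
  have hcontract : Sid k H R * R = 1 ⊗ₜ εid k H R := by
    rw [← antipodeMul₁₂_ι₁₃_mul_ι₂₃, ← hΔ, antipodeMul₁₂_Δid]
  have hε : εid k H R = 1 := by
    refine (IsIdempotentElem.iff_eq_one_of_isUnit (hR.map (εid k H))).mp ?_
    have h := congrArg (εid k H) hcontract
    rw [map_mul, εid_Sid] at h
    exact h.trans (by simp)
  rw [hcontract, hε, Algebra.TensorProduct.one_def]

lemma mul_lTensor_antipode_self_of_idΔ {Q : H ⊗[k] H} (hQ : IsUnit Q)
    (hΔ : idΔ k H Q = ι₁₂ k H Q * ι₁₃ k H Q) : Q * LinearMap.lTensor H S Q = 1 := by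
  have hcontract : Q * LinearMap.lTensor H S Q = idε k H Q ⊗ₜ 1 := by
    rw [← mulAntipode₂₃_ι₁₂_mul_ι₁₃, ← hΔ, mulAntipode₂₃_idΔ]
  have hε : idε k H Q = 1 := by
    refine (IsIdempotentElem.iff_eq_one_of_isUnit (hQ.map (idε k H))).mp ?_
    have h := congrArg (idε k H) hcontract
    rw [map_mul, idε_lTensor_antipode] at h
    exact h.trans (by simp)
  rw [hcontract, hε, Algebra.TensorProduct.one_def]

lemma idΔ_eq_of_inverse {R Q : H ⊗[k] H} (hQR : Q * R = 1) (hRQ : R * Q = 1)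
    (hΔ : idΔ k H R = ι₁₃ k H R * ι₁₂ k H R) :
    idΔ k H Q = ι₁₂ k H Q * ι₁₃ k H Q := by
  refine left_inv_eq_right_inv (a := idΔ k H R) (by rw [← map_mul, hQR, map_one]) ?_
  rw [hΔ, mul_assoc, ← mul_assoc (ι₁₂ k H R), ← map_mul, hRQ, map_one, one_mul, ← map_mul, hRQ,
    map_one]

lemma SS_eq_lTensor_Sid (w : H ⊗[k] H) :
    SS k H w = LinearMap.lTensor H S (Sid k H w) := by
  rw [← LinearMap.comp_apply, LinearMap.lTensor_comp_rTensor]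

end UnivRMatrix

/-- If `R` is a universal R-matrix on a Hopf algebra `H` over a field `k`, then
`(S ⊗ id)(R)` is a (two-sided) inverse of `R`, and `(S ⊗ S)(R) = R`. -/
theorem antipode_apply_univRMatrix {k H : Type*} [Field k] [Ring H] [HopfAlgebra k H]
    (R : H ⊗[k] H) (hR : IsUnivRMatrix k H R) :
    Sid k H R * R = 1 ∧ R * Sid k H R = 1 ∧ SS k H R = R := by
  obtain ⟨hunit, -, hidΔ, hΔid⟩ := hR
  have hQR : Sid k H R * R = 1 := Sid_mul_self_of_Δid hunit hΔid
  have hRQ : R * Sid k H R = 1 := by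
    obtain ⟨R', hR'⟩ := hunit.exists_right_inv
    rwa [left_inv_eq_right_inv hQR hR']
  have hQ : IsUnit (Sid k H R) := ⟨⟨Sid k H R, R, hQR, hRQ⟩, rfl⟩
  have hQQ' := mul_lTensor_antipode_self_of_idΔ hQ (idΔ_eq_of_inverse hQR hRQ hidΔ)
  refine ⟨hQR, hRQ, ?_⟩
  rw [SS_eq_lTensor_Sid]
  exact (left_inv_eq_right_inv hRQ hQQ').symm

end
end

section
/- Let k be a field, H a Hopf algebra over k, and R a unitary universal R-matrix on H (i.e. R·τ(R) = 1). Then for every l ∈ H*, S((id⊗l)(R)) = (l⊗id)(R); consequently the subspaces H_l and H_r coincide. -/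
open scoped TensorProduct

noncomputable section

variable (k H : Type*) [Field k] [Ring H] [HopfAlgebra k H]

/-!
Applying `ε ⊗ id ⊗ id` to `(Δ ⊗ id)(R) = R₁₃ R₂₃` gives `R = (1 ⊗ (ε ⊗ id)(R)) R`, so
`(ε ⊗ id)(R) = 1` because `R` is invertible; applying instead `a ⊗ b ⊗ c ↦ S(a) b ⊗ c` and the
antipode axiom gives `(S ⊗ id)(R) · R = 1`. Hence `(S ⊗ id)(R) = R⁻¹ = τ(R)` for unitary `R`, and
slicing this identity with `l` in the second factor gives `S((id ⊗ l)(R)) = (l ⊗ id)(R)`.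
So `H_r = S(H_l)`, while slicing it with `l ∘ S` in the first factor gives `H_l ⊆ H_r`. As `H_l`
is finite-dimensional (spanned by the first legs of `R`), `H_l ⊆ S(H_l)` forces equality.
-/

open HopfAlgebra Coalgebra

theorem Submodule.map_eq_self_of_le_map {K V : Type*} [Field K] [AddCommGroup V] [Module K V]
    {f : V →ₗ[K] V} {p : Submodule K V} [FiniteDimensional K p] (h : p ≤ p.map f) :
    p.map f = p :=
  (Submodule.eq_of_le_of_finrank_le h (Submodule.finrank_map_le f p)).symm

section

variable {k H}

@[simp]
lemma evR_tmul (l : H →ₗ[k] k) (x y : H) : evR k H l (x ⊗ₜ y) = l y • x := by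
  simp [evR]

@[simp]
lemma evL_tmul (l : H →ₗ[k] k) (x y : H) : evL k H l (x ⊗ₜ y) = l x • y := by
  simp [evL]

lemma evR_comm (l : H →ₗ[k] k) (z : H ⊗[k] H) :
    evR k H l (TensorProduct.comm k H H z) = evL k H l z := by
  induction z using TensorProduct.induction_on <;> simp_all

lemma evL_comm (l : H →ₗ[k] k) (z : H ⊗[k] H) :
    evL k H l (TensorProduct.comm k H H z) = evR k H l z := by
  induction z using TensorProduct.induction_on <;> simp_all

lemma evR_rTensor (l : H →ₗ[k] k) (f : H →ₗ[k] H) (z : H ⊗[k] H) :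
    evR k H l (f.rTensor H z) = f (evR k H l z) := by
  induction z using TensorProduct.induction_on <;> simp_all

lemma evL_rTensor (l : H →ₗ[k] k) (f : H →ₗ[k] H) (z : H ⊗[k] H) :
    evL k H l (f.rTensor H z) = evL k H (l ∘ₗ f) z := by
  induction z using TensorProduct.induction_on <;> simp_all

def evRₗ (R : H ⊗[k] H) : (H →ₗ[k] k) →ₗ[k] H where
  toFun l := evR k H l R
  map_add' l l' := by simp [evR, LinearMap.lTensor_add]
  map_smul' c l := by simp [evR, LinearMap.lTensor_smul]

def evLₗ (R : H ⊗[k] H) : (H →ₗ[k] k) →ₗ[k] H where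
  toFun l := evL k H l R
  map_add' l l' := by simp [evL, LinearMap.rTensor_add]
  map_smul' c l := by simp [evL, LinearMap.rTensor_smul]

lemma Hl_eq_range (R : H ⊗[k] H) : Hl k H R = LinearMap.range (evRₗ R) := rfl

lemma Hr_eq_range (R : H ⊗[k] H) : Hr k H R = LinearMap.range (evLₗ R) := rfl

instance finiteDimensional_range_evRₗ (R : H ⊗[k] H) :
    FiniteDimensional k (LinearMap.range (evRₗ R)) := by
  classical
  obtain ⟨s, hs⟩ := TensorProduct.exists_finset R
  refine Submodule.finiteDimensional_of_le (S₂ := Submodule.span k (s.image Prod.fst)) ?_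
  rintro _ ⟨l, rfl⟩
  show evR k H l R ∈ _
  rw [hs, map_sum]
  exact Submodule.sum_mem _ fun p hp => by
    rw [evR_tmul]
    exact Submodule.smul_mem _ _ (Submodule.subset_span (Finset.mem_image_of_mem Prod.fst hp))

def counitLeft : H ⊗[k] (H ⊗[k] H) →ₐ[k] H ⊗[k] H :=
  (Algebra.TensorProduct.lid k (H ⊗[k] H)).toAlgHom.comp
    (Algebra.TensorProduct.map (Bialgebra.counitAlgHom k H) (AlgHom.id k (H ⊗[k] H)))

def mulAntipodeLeft : H ⊗[k] (H ⊗[k] H) →ₗ[k] H ⊗[k] H :=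
  LinearMap.mul' k (H ⊗[k] H) ∘ₗ
    (Algebra.TensorProduct.includeLeft.toLinearMap ∘ₗ antipode k).rTensor (H ⊗[k] H)

@[simp]
lemma counitLeft_tmul (a : H) (w : H ⊗[k] H) : counitLeft (a ⊗ₜ w) = counit (R := k) a • w := by
  simp [counitLeft, Bialgebra.counitAlgHom_apply]

@[simp]
lemma mulAntipodeLeft_tmul (a : H) (w : H ⊗[k] H) :
    mulAntipodeLeft (a ⊗ₜ w) = (antipode k a ⊗ₜ (1 : H)) * w := by
  simp [mulAntipodeLeft]

lemma counitLeft_Δid (z : H ⊗[k] H) : counitLeft (Δid k H z) = z := by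
  induction z using TensorProduct.induction_on with
  | zero => simp
  | tmul a b =>
    conv_rhs => rw [← sum_counit_smul (ℛ k a)]
    simp only [Δid, AlgHom.comp_apply, Algebra.TensorProduct.map_tmul, Bialgebra.comulAlgHom_apply,
      ← (ℛ k a).eq, TensorProduct.sum_tmul, map_sum]
    simp [TensorProduct.smul_tmul']
  | add x y hx hy => simp only [map_add, hx, hy]

lemma mulAntipodeLeft_Δid (z : H ⊗[k] H) :
    mulAntipodeLeft (Δid k H z) = 1 ⊗ₜ εid k H z := by
  induction z using TensorProduct.induction_on with
  | zero => simp
  | tmul a b =>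
    simp only [Δid, AlgHom.comp_apply, Algebra.TensorProduct.map_tmul, Bialgebra.comulAlgHom_apply,
      ← (ℛ k a).eq, TensorProduct.sum_tmul, map_sum]
    simp [← TensorProduct.sum_tmul, sum_antipode_mul_eq_smul, Bialgebra.counitAlgHom_apply,
      TensorProduct.smul_tmul']
  | add x y hx hy => simp only [map_add, hx, hy, TensorProduct.tmul_add]

lemma counitLeft_ι₁₃ (z : H ⊗[k] H) : counitLeft (ι₁₃ k H z) = 1 ⊗ₜ εid k H z := by
  induction z using TensorProduct.induction_on with
  | zero => simp
  | tmul a b => simp [Bialgebra.counitAlgHom_apply]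
  | add x y hx hy => simp only [map_add, hx, hy, TensorProduct.tmul_add]

lemma counitLeft_ι₂₃ (z : H ⊗[k] H) : counitLeft (ι₂₃ k H z) = z := by
  simp [Algebra.TensorProduct.includeRight_apply]

lemma mulAntipodeLeft_ι₁₃ (z : H ⊗[k] H) : mulAntipodeLeft (ι₁₃ k H z) = Sid k H z := by
  induction z using TensorProduct.induction_on with
  | zero => simp
  | tmul a b => simp
  | add x y hx hy => simp only [map_add, hx, hy]

lemma mulAntipodeLeft_mul_ι₂₃ (t : H ⊗[k] (H ⊗[k] H)) (r : H ⊗[k] H) :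
    mulAntipodeLeft (t * ι₂₃ k H r) = mulAntipodeLeft t * r := by
  induction t using TensorProduct.induction_on with
  | zero => simp
  | tmul a w => simp [Algebra.TensorProduct.includeRight_apply, mul_assoc]
  | add x y hx hy => simp only [add_mul, map_add, hx, hy]

variable {R : H ⊗[k] H}

lemma εid_eq_one_of_Δid_eq (hR : IsUnit R) (hΔ : Δid k H R = ι₁₃ k H R * ι₂₃ k H R) :
    εid k H R = 1 := by
  have h : (1 ⊗ₜ εid k H R) * R = R := by
    simpa only [map_mul, counitLeft_Δid, counitLeft_ι₁₃, counitLeft_ι₂₃] using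
      (congrArg counitLeft hΔ).symm
  simpa [Bialgebra.counitAlgHom_apply] using congrArg (εid k H) (hR.mul_eq_right.1 h)

lemma Sid_mul_self_of_Δid_eq (hR : IsUnit R) (hΔ : Δid k H R = ι₁₃ k H R * ι₂₃ k H R) :
    Sid k H R * R = 1 := by
  have h := congrArg mulAntipodeLeft hΔ
  rwa [mulAntipodeLeft_Δid, mulAntipodeLeft_mul_ι₂₃, mulAntipodeLeft_ι₁₃,
    εid_eq_one_of_Δid_eq hR hΔ, ← Algebra.TensorProduct.one_def, eq_comm] at h

lemma Sid_eq_comm_of_unitary (hR : IsUnit R) (hΔ : Δid k H R = ι₁₃ k H R * ι₂₃ k H R)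
    (hU : R * τ k H R = 1) : Sid k H R = TensorProduct.comm k H H R :=
  left_inv_eq_right_inv (Sid_mul_self_of_Δid_eq hR hΔ) hU

lemma antipode_evR_of_Sid_eq_comm (h : Sid k H R = TensorProduct.comm k H H R)
    (l : H →ₗ[k] k) : antipode k (evR k H l R) = evL k H l R := by
  rw [← evR_rTensor, ← evR_comm]
  exact congrArg (evR k H l) h

lemma Hl_eq_Hr_of_Sid_eq_comm (h : Sid k H R = TensorProduct.comm k H H R) :
    Hl k H R = Hr k H R := by
  have hmap : LinearMap.range (evLₗ R) = (LinearMap.range (evRₗ R)).map (antipode k) := by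
    rw [← LinearMap.range_comp]
    congr 1
    ext l
    exact (antipode_evR_of_Sid_eq_comm h l).symm
  have hle : LinearMap.range (evRₗ R) ≤ LinearMap.range (evLₗ R) := by
    rintro _ ⟨l, rfl⟩
    refine ⟨l ∘ₗ antipode k, ?_⟩
    show evL k H (l ∘ₗ antipode k) R = evR k H l R
    rw [← evL_rTensor, ← evL_comm]
    exact congrArg (evL k H l) h
  rw [Hl_eq_range, Hr_eq_range, hmap, Submodule.map_eq_self_of_le_map (hmap ▸ hle)]

end

/-- For a unitary universal R-matrix, `S((id ⊗ l)(R)) = (l ⊗ id)(R)` for every `l ∈ H*`;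
consequently `H_l = H_r`. -/
theorem antipode_evR_of_unitary {k H : Type*} [Field k] [Ring H] [HopfAlgebra k H]
    (R : H ⊗[k] H) (hR : IsUnivRMatrix k H R) (hU : R * τ k H R = 1) :
    (∀ l : H →ₗ[k] k, HopfAlgebra.antipode (R := k) (evR k H l R) = evL k H l R) ∧
    Hl k H R = Hr k H R := by
  obtain ⟨hunit, -, -, hΔ⟩ := hR
  have hSid := Sid_eq_comm_of_unitary hunit hΔ hU
  exact ⟨antipode_evR_of_Sid_eq_comm hSid, Hl_eq_Hr_of_Sid_eq_comm hSid⟩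

end
end

section
/- Let k be a field, H a cocommutative Hopf algebra over k, and R a universal R-matrix on H. Then the map α(l) = (id⊗l)(R) is H-equivariant for the adjoint actions: α(l^h) = (α(l))^h for all h ∈ H and l ∈ H*. In particular H_l is a normal subspace of H: for all h ∈ H and x ∈ H_l, the element x^h = Σ_(h) h₍₁₎·x·S(h₍₂₎) lies in H_l, and the same holds for H_r and β(l) = (l⊗id)(R). -/
open scoped TensorProduct

noncomputable section

variable (k H : Type*) [Field k] [Ring H] [HopfAlgebra k H]

/-!
In the convolution algebra of linear maps `H → H ⊗ H`, let `ι₁ x = x ⊗ 1`, `ι₂ x = 1 ⊗ x` and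
`c x = ε(x) R`. Since `ι₁, ι₂` are algebra maps they are invertible with inverses `ιᵢ ∘ S`, and
`(ad h ⊗ id)(R) = (ι₁ c ι₁⁻¹)(h)`, `(id ⊗ ad h)(R) = (ι₂ c ι₂⁻¹)(h)`. Cocommutativity gives
`ι₁ ι₂ = Δ = ι₂ ι₁`, and the R-matrix axiom says that `c` commutes with `Δ`, whence
`ι₁ c ι₁⁻¹ = ι₂⁻¹ c ι₂`. For cocommutative `H`, precomposition with `S` is multiplicative for
convolution and `S² = id`, so `ι₂⁻¹ c ι₂ = (ι₂ c ι₂⁻¹) ∘ S`. Thus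
`(ad h ⊗ id)(R) = (id ⊗ ad (S h))(R)`, and applying `id ⊗ l` gives the equivariance of `α`. The
flip `τ(R)` also commutes with `Δ`, which gives the statement for `β`.
-/
section
open TensorProduct WithConv Coalgebra HopfAlgebra

theorem mul_mul_eq_mul_mul_of_commute {M : Type*} [Monoid M] {a a' b b' c : M}
    (ha : a * a' = 1) (hb : b' * b = 1) (hab : Commute a b) (hc : Commute c (a * b)) :
    a * c * a' = b' * c * b :=
  calc a * c * a' = b' * b * a * c * a' := by rw [hb, one_mul]
    _ = b' * (a * b * c) * a' := by rw [hab.eq]; simp only [mul_assoc]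
    _ = b' * (c * (a * b)) * a' := by rw [hc.eq]
    _ = b' * c * b * (a * a') := by rw [hab.eq]; simp only [mul_assoc]
    _ = b' * c * b := by rw [ha, mul_one]

namespace LinearMap

section Conv
variable {K C A : Type*} [CommSemiring K] [Semiring A] [Algebra K A]

local notation "inl" =>
  AlgHom.toLinearMap (Algebra.TensorProduct.includeLeft : C →ₐ[K] C ⊗[K] C)
local notation "inr" =>
  AlgHom.toLinearMap (Algebra.TensorProduct.includeRight : C →ₐ[K] C ⊗[K] C)
local notation "𝑺" => antipode K (A := C)

section Coalgebra
variable [AddCommMonoid C] [Module K C] [Coalgebra K C]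

def convConst (a : A) : WithConv (C →ₗ[K] A) := toConv (toSpanSingleton K A a ∘ₗ counit)

lemma convConst_mul (a : A) (f : WithConv (C →ₗ[K] A)) :
    convConst a * f = toConv (mulLeft K a ∘ₗ f.ofConv) := by
  ext c
  rw [convMul_apply, convConst, ofConv_toConv, ← map_comp_rTensor, comp_apply,
    rTensor_counit_comul]
  simp

lemma mul_convConst (a : A) (f : WithConv (C →ₗ[K] A)) :
    f * convConst a = toConv (mulRight K a ∘ₗ f.ofConv) := by
  ext c
  rw [convMul_apply, convConst, ofConv_toConv, ← map_comp_lTensor, comp_apply,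
    lTensor_counit_comul]
  simp

lemma commute_convConst_iff (a : A) (f : WithConv (C →ₗ[K] A)) :
    Commute (convConst a) f ↔ ∀ c, Commute a (f c) := by
  simp only [Commute, SemiconjBy, convConst_mul, mul_convConst, WithConv.ext_iff, LinearMap.ext_iff]
  rfl

end Coalgebra

section Bialgebra
variable [Semiring C] [Algebra K C] [Coalgebra K C]

lemma includeLeft_mul_includeRight : toConv inl * toConv inr = toConv (comul (R := K)) := by
  ext x
  rw [convMul_apply]
  induction comul (R := K) x using TensorProduct.induction_on <;>
    simp_all [Algebra.TensorProduct.tmul_mul_tmul]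

lemma includeRight_mul_includeLeft [IsCocomm K C] :
    toConv inr * toConv inl = toConv (comul (R := K)) := by
  ext x
  rw [convMul_apply]
  conv_rhs => rw [← comm_comul K x]
  induction comul (R := K) x using TensorProduct.induction_on <;>
    simp_all [Algebra.TensorProduct.tmul_mul_tmul]

end Bialgebra

section Hopf
variable [Semiring C] [HopfAlgebra K C]

lemma algHom_comp_antipode_mul (φ : C →ₐ[K] A) :
    toConv (φ.toLinearMap ∘ₗ 𝑺) * toConv φ.toLinearMap = 1 := by
  have h := algHom_comp_convMul_distrib φ (toConv 𝑺) (toConv id)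
  rw [antipode_mul_id, ofConv_toConv, ofConv_toConv, comp_id] at h
  rw [← toConv_ofConv (_ * _), ← h]
  ext; simp

lemma algHom_mul_comp_antipode (φ : C →ₐ[K] A) :
    toConv φ.toLinearMap * toConv (φ.toLinearMap ∘ₗ 𝑺) = 1 := by
  have h := algHom_comp_convMul_distrib φ (toConv id) (toConv 𝑺)
  rw [id_mul_antipode, ofConv_toConv, ofConv_toConv, comp_id] at h
  rw [← toConv_ofConv (_ * _), ← h]
  ext; simp

lemma convConst_comp_antipode (a : A) :
    toConv ((convConst a).ofConv ∘ₗ 𝑺) = (convConst a : WithConv (C →ₗ[K] A)) := by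
  simp [convConst, comp_assoc]

variable [IsCocomm K C]

lemma comul_comp_antipode :
    comul ∘ₗ 𝑺 = map 𝑺 𝑺 ∘ₗ comul (R := K) := by
  have h_split :
      toConv (map 𝑺 𝑺 ∘ₗ comul (R := K)) = toConv (inr ∘ₗ 𝑺) * toConv (inl ∘ₗ 𝑺) := by
    ext x
    rw [convMul_apply, ofConv_toConv, comp_apply]
    conv_lhs => rw [← comm_comul K x]
    induction comul (R := K) x using TensorProduct.induction_on <;>
      simp_all [Algebra.TensorProduct.tmul_mul_tmul]
  have h_left_inv : toConv (map 𝑺 𝑺 ∘ₗ comul (R := K)) * toConv comul = 1 := by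
    rw [h_split, ← includeLeft_mul_includeRight, mul_assoc, ← mul_assoc (toConv (inl ∘ₗ 𝑺)),
      algHom_comp_antipode_mul, one_mul, algHom_comp_antipode_mul]
  exact congr(ofConv $(left_inv_eq_right_inv h_left_inv comul_right_inv)).symm

lemma convMul_comp_antipode (f g : WithConv (C →ₗ[K] A)) :
    toConv ((f * g).ofConv ∘ₗ 𝑺) =
      toConv (f.ofConv ∘ₗ 𝑺) * toConv (g.ofConv ∘ₗ 𝑺) := by
  simp only [convMul_def, ofConv_toConv, comp_assoc, comul_comp_antipode, map_comp]

lemma antipode_comp_antipode : 𝑺 ∘ₗ 𝑺 = id := by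
  have h_left_inv : toConv (𝑺 ∘ₗ 𝑺) * toConv 𝑺 = 1 := by
    simpa [convOne_def, comp_assoc] using (convMul_comp_antipode (toConv 𝑺) (toConv id)).symm
  exact congr(ofConv $(left_inv_eq_right_inv h_left_inv antipode_mul_id))

end Hopf
end Conv
end LinearMap

section TensorMul
variable {K A B : Type*} [CommSemiring K] [Semiring A] [Algebra K A] [Semiring B] [Algebra K B]

lemma LinearMap.rTensor_mulRight_comp_mulLeft (x y : A) (t : A ⊗[K] B) :
    rTensor B (mulRight K y ∘ₗ mulLeft K x) t = (x ⊗ₜ 1) * t * (y ⊗ₜ 1) := by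
  induction t using TensorProduct.induction_on <;>
    simp_all [Algebra.TensorProduct.tmul_mul_tmul, mul_add, add_mul, mul_assoc]

lemma LinearMap.lTensor_mulRight_comp_mulLeft (x y : B) (t : A ⊗[K] B) :
    lTensor A (mulRight K y ∘ₗ mulLeft K x) t = (1 ⊗ₜ x) * t * (1 ⊗ₜ y) := by
  induction t using TensorProduct.induction_on <;>
    simp_all [Algebra.TensorProduct.tmul_mul_tmul, mul_add, add_mul, mul_assoc]

end TensorMul

section Adjoint
open LinearMap
variable {k H}

local notation "𝑺" => antipode k (A := H)
local notation "inl" =>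
  AlgHom.toLinearMap (Algebra.TensorProduct.includeLeft : H →ₐ[k] H ⊗[k] H)
local notation "inr" =>
  AlgHom.toLinearMap (Algebra.TensorProduct.includeRight : H →ₐ[k] H ⊗[k] H)

lemma rTensor_adEnd_apply (h : H) (T : H ⊗[k] H) :
    rTensor H (adEnd k H h) T =
      (toConv inl * convConst T * toConv (inl ∘ₗ 𝑺)).ofConv h := by
  rw [mul_convConst, convMul_apply, adEnd]
  induction comul (R := k) h using TensorProduct.induction_on <;>
    simp_all [rTensor_mulRight_comp_mulLeft, rTensor_add]

lemma lTensor_adEnd_apply (h : H) (T : H ⊗[k] H) :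
    lTensor H (adEnd k H h) T =
      (toConv inr * convConst T * toConv (inr ∘ₗ 𝑺)).ofConv h := by
  rw [mul_convConst, convMul_apply, adEnd]
  induction comul (R := k) h using TensorProduct.induction_on <;>
    simp_all [lTensor_mulRight_comp_mulLeft, lTensor_add]

theorem rTensor_adEnd_eq_lTensor_adEnd_antipode [Coalgebra.IsCocomm k H] (T : H ⊗[k] H)
    (hT : ∀ x : H, Commute T (comul x)) (h : H) :
    rTensor H (adEnd k H h) T = lTensor H (adEnd k H (𝑺 h)) T := by
  have h_ab : Commute (toConv inl) (toConv inr) :=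
    includeLeft_mul_includeRight.trans includeRight_mul_includeLeft.symm
  have h_comm : Commute (convConst T) (toConv inl * toConv inr) := by
    rw [includeLeft_mul_includeRight, commute_convConst_iff]
    exact hT
  have h_conj := mul_mul_eq_mul_mul_of_commute (algHom_mul_comp_antipode _)
    (algHom_comp_antipode_mul _) h_ab h_comm
  have h_twist : toConv ((toConv inr * convConst T * toConv (inr ∘ₗ 𝑺)).ofConv ∘ₗ 𝑺) =
      toConv (inr ∘ₗ 𝑺) * convConst T * toConv inr := by
    rw [convMul_comp_antipode, convMul_comp_antipode, convConst_comp_antipode, ofConv_toConv,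
      comp_assoc, antipode_comp_antipode, comp_id]
  rw [rTensor_adEnd_apply, lTensor_adEnd_apply, h_conj, ← h_twist, ofConv_toConv, comp_apply]

end Adjoint

section Evaluation
open LinearMap
variable {k H}

lemma evR_comp (l : H →ₗ[k] k) (φ : H →ₗ[k] H) (T : H ⊗[k] H) :
    evR k H (l ∘ₗ φ) T = evR k H l (lTensor H φ T) := by
  simp [evR, lTensor_comp]

lemma map_evR (φ : H →ₗ[k] H) (l : H →ₗ[k] k) (T : H ⊗[k] H) :
    φ (evR k H l T) = evR k H l (rTensor H φ T) := by
  induction T using TensorProduct.induction_on <;> simp_all [evR]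

lemma evL_eq_evR_comm (l : H →ₗ[k] k) (T : H ⊗[k] H) :
    evL k H l T = evR k H l (TensorProduct.comm k H H T) := by
  induction T using TensorProduct.induction_on <;> simp_all [evL, evR]

theorem evR_comp_adEnd_antipode [Coalgebra.IsCocomm k H] (T : H ⊗[k] H)
    (hT : ∀ x : H, Commute T (comul x)) (h : H) (l : H →ₗ[k] k) :
    evR k H (l ∘ₗ adEnd k H (antipode k h)) T = adEnd k H h (evR k H l T) := by
  rw [evR_comp, map_evR, rTensor_adEnd_eq_lTensor_adEnd_antipode T hT]

end Evaluation

end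

/-- For a universal R-matrix `R` on a cocommutative Hopf algebra `H`, the maps
`α(l) = (id ⊗ l)(R)` and `β(l) = (l ⊗ id)(R)` are equivariant for the adjoint actions
(`α(l^h) = α(l)^h`); in particular `H_l` and `H_r` are normal (adjoint-invariant)
subspaces of `H`. -/
theorem evR_evL_adjoint_equivariant {k H : Type*} [Field k] [Ring H] [HopfAlgebra k H]
    (R : H ⊗[k] H) (hR : IsUnivRMatrix k H R) (hC : IsCocomm k H) :
    (∀ (h : H) (l : H →ₗ[k] k),
      evR k H (l ∘ₗ adEnd k H (HopfAlgebra.antipode (R := k) h)) R =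
        adEnd k H h (evR k H l R)) ∧
    (∀ (h : H) (l : H →ₗ[k] k),
      evL k H (l ∘ₗ adEnd k H (HopfAlgebra.antipode (R := k) h)) R =
        adEnd k H h (evL k H l R)) ∧
    (∀ h : H, ∀ x ∈ Hl k H R, adEnd k H h x ∈ Hl k H R) ∧
    (∀ h : H, ∀ x ∈ Hr k H R, adEnd k H h x ∈ Hr k H R) := by
  have : Coalgebra.IsCocomm k H := ⟨LinearMap.ext hC⟩
  have hR_comm (x : H) : Commute R (Coalgebra.comul x) := by
    have h := hR.2.1 x
    rwa [show τ k H (Δ k H x) = Coalgebra.comul x from hC x] at h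
  have hRτ_comm (x : H) : Commute (TensorProduct.comm k H H R) (Coalgebra.comul x) := by
    have h := (hR_comm x).map (Algebra.TensorProduct.comm k H H)
    rwa [show Algebra.TensorProduct.comm k H H (Coalgebra.comul x) = Coalgebra.comul x
      from hC x] at h
  have equivariant_evR := evR_comp_adEnd_antipode R hR_comm
  have equivariant_evL (h : H) (l : H →ₗ[k] k) :
      evL k H (l ∘ₗ adEnd k H (HopfAlgebra.antipode k h)) R = adEnd k H h (evL k H l R) := by
    simpa only [evL_eq_evR_comm] using evR_comp_adEnd_antipode _ hRτ_comm h l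
  refine ⟨equivariant_evR, equivariant_evL, ?_, ?_⟩
  · rintro h _ ⟨l, rfl⟩
    exact ⟨_, equivariant_evR h l⟩
  · rintro h _ ⟨l, rfl⟩
    exact ⟨_, equivariant_evL h l⟩
end
end

section
/- Let k be a field, H a Hopf algebra over k, and R a unitary universal R-matrix on H (R·τ(R) = 1). Let F = {(id⊗l)(R) : l ∈ H*} be the image of the map α(l) = (id⊗l)(R). Then: (1) F is a subalgebra of H containing 1; (2) Δ(F) is contained in the image of the canonical map F⊗F → H⊗H; (3) S(F) ⊆ F; (4) R lies in the image of the canonical map F⊗F → H⊗H; and (5) R is nondegenerate on F, i.e. writing R as an element R' of F⊗F, the induced linear map F* → F, m ↦ (id⊗m)(R'), is bijective. -/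
open scoped TensorProduct

noncomputable section

variable (k H : Type*) [Field k] [Ring H] [HopfAlgebra k H]

/-! Let `F = {(id ⊗ l)(R)}` and `G = {(l ⊗ id)(R)}`. Slicing the two hexagon identities shows
that `F` is closed under products and coproducts, and applying `id ⊗ id ⊗ ε`, `ε ⊗ id ⊗ id` and
`μ(S ⊗ id) ⊗ id` to them gives `(id ⊗ ε)(R) = 1` and `(S ⊗ id)(R) = R⁻¹`. Unitarity turns the
latter into `(S ⊗ id)(R) = τ(R)`, whence `G = S(F)` and `F ⊆ G`; as `F` is finite-dimensional,
`F = G = S(F)`. Over a field every tensor `x` lies in `{(id ⊗ l)(x)} ⊗ {(l ⊗ id)(x)}`, so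
`R ∈ F ⊗ F`; and `(id ⊗ m)(R) = 0` forces `m` to vanish on `G = F`, so `F* → F` is injective,
hence bijective by counting dimensions. -/

namespace TensorProduct

section CommRing

variable {R M N P Q : Type*} [CommRing R] [AddCommGroup M] [Module R M] [AddCommGroup N]
  [Module R N] [AddCommGroup P] [Module R P] [AddCommGroup Q] [Module R Q]

def sliceRight (x : M ⊗[R] N) : Module.Dual R N →ₗ[R] M where
  toFun l := TensorProduct.rid R M (l.lTensor M x)
  map_add' l l' := by simp [LinearMap.lTensor_add]
  map_smul' c l := by simp [LinearMap.lTensor_smul]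

def sliceLeft (x : M ⊗[R] N) : Module.Dual R M →ₗ[R] N :=
  sliceRight (TensorProduct.comm R M N x)

lemma sliceRight_apply (x : M ⊗[R] N) (l : Module.Dual R N) :
    sliceRight x l = TensorProduct.rid R M (l.lTensor M x) := rfl

@[simp] lemma sliceRight_tmul (m : M) (n : N) (l : Module.Dual R N) :
    sliceRight (m ⊗ₜ[R] n) l = l n • m := by
  simp [sliceRight_apply]

@[simp] lemma sliceRight_zero : sliceRight (0 : M ⊗[R] N) = 0 := by
  ext l; simp [sliceRight_apply]

@[simp] lemma sliceRight_add (x y : M ⊗[R] N) :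
    sliceRight (x + y) = sliceRight x + sliceRight y := by
  ext l; simp [sliceRight_apply]

lemma sliceRight_comm (x : M ⊗[R] N) : sliceRight (TensorProduct.comm R M N x) = sliceLeft x :=
  rfl

@[simp] lemma sliceLeft_tmul (m : M) (n : N) (l : Module.Dual R M) :
    sliceLeft (m ⊗ₜ[R] n) l = l m • n := by
  simp [sliceLeft]

@[simp] lemma sliceLeft_zero : sliceLeft (0 : M ⊗[R] N) = 0 := by
  simp [sliceLeft]

@[simp] lemma sliceLeft_add (x y : M ⊗[R] N) :
    sliceLeft (x + y) = sliceLeft x + sliceLeft y := by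
  simp [sliceLeft]

lemma sliceLeft_comm (x : M ⊗[R] N) : sliceLeft (TensorProduct.comm R M N x) = sliceRight x := by
  rw [sliceLeft, comm_comm]

lemma sliceRight_map (f : M →ₗ[R] P) (g : N →ₗ[R] Q) (x : M ⊗[R] N) (l : Module.Dual R Q) :
    sliceRight (map f g x) l = f (sliceRight x (l ∘ₗ g)) := by
  induction x using TensorProduct.induction_on with
  | zero => simp
  | tmul m n => simp
  | add x y hx hy => simp [hx, hy]

lemma sliceLeft_map (f : M →ₗ[R] P) (g : N →ₗ[R] Q) (x : M ⊗[R] N) (l : Module.Dual R P) :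
    sliceLeft (map f g x) l = g (sliceLeft x (l ∘ₗ f)) := by
  induction x using TensorProduct.induction_on with
  | zero => simp
  | tmul m n => simp
  | add x y hx hy => simp [hx, hy]

lemma sliceRight_rTensor (f : M →ₗ[R] P) (x : M ⊗[R] N) :
    sliceRight (f.rTensor N x) = f ∘ₗ sliceRight x := by
  ext l
  exact sliceRight_map f LinearMap.id x l

lemma sliceLeft_rTensor (f : M →ₗ[R] P) (x : M ⊗[R] N) (l : Module.Dual R P) :
    sliceLeft (f.rTensor N x) l = sliceLeft x (l ∘ₗ f) :=
  sliceLeft_map f LinearMap.id x l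

lemma apply_sliceRight (x : M ⊗[R] N) (φ : Module.Dual R M) (l : Module.Dual R N) :
    φ (sliceRight x l) = l (sliceLeft x φ) := by
  induction x using TensorProduct.induction_on with
  | zero => simp
  | tmul m n => simp [mul_comm]
  | add x y hx hy => simp [hx, hy]

lemma range_sliceLeft_map_le (f : M →ₗ[R] P) (g : N →ₗ[R] Q) (x : M ⊗[R] N) :
    LinearMap.range (sliceLeft (map f g x)) ≤ (LinearMap.range (sliceLeft x)).map g := by
  rintro _ ⟨l, rfl⟩
  rw [sliceLeft_map]
  exact Submodule.mem_map_of_mem (LinearMap.mem_range_self _ _)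

end CommRing

section Field

variable {K V W : Type*} [Field K] [AddCommGroup V] [Module K V] [AddCommGroup W] [Module K W]

lemma ext_sliceRight {x y : V ⊗[K] W} (h : ∀ l, sliceRight x l = sliceRight y l) : x = y := by
  classical
  let b := Module.Basis.ofVectorSpace K W
  have hcoord : ∀ z : V ⊗[K] W, ∀ i,
      equivFinsuppOfBasisRight b z i = sliceRight z (b.coord i) := by
    intro z i
    induction z using TensorProduct.induction_on with
    | zero => simp
    | tmul m n => simp
    | add z z' hz hz' => simp [hz, hz']
  apply (equivFinsuppOfBasisRight b).injective
  ext i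
  rw [hcoord, hcoord, h]

instance finiteDimensional_range_sliceRight (x : V ⊗[K] W) :
    FiniteDimensional K (LinearMap.range (sliceRight x)) := by
  obtain ⟨s, rfl⟩ := exists_finset x
  have := FiniteDimensional.span_of_finite K (s.finite_toSet.image Prod.fst)
  refine Submodule.finiteDimensional_of_le
    (S₂ := Submodule.span K (Prod.fst '' (s : Set (V × W)))) ?_
  rintro _ ⟨l, rfl⟩
  simp only [sliceRight_apply, map_sum]
  refine Submodule.sum_mem _ fun i hi => ?_
  simpa using Submodule.smul_mem _ _ (Submodule.subset_span (Set.mem_image_of_mem _ hi))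

lemma mem_range_mapIncl_range_slice (x : V ⊗[K] W) :
    x ∈ LinearMap.range
      (mapIncl (LinearMap.range (sliceRight x)) (LinearMap.range (sliceLeft x))) := by
  set F := LinearMap.range (sliceRight x)
  set G := LinearMap.range (sliceLeft x)
  obtain ⟨πF, hπF⟩ := F.subtype.exists_leftInverse_of_injective F.ker_subtype
  obtain ⟨πG, hπG⟩ := G.subtype.exists_leftInverse_of_injective G.ker_subtype
  have hF : ∀ v ∈ F, F.subtype (πF v) = v := fun v hv =>
    congrArg Subtype.val (LinearMap.congr_fun hπF ⟨v, hv⟩)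
  have hG : ∀ w ∈ G, G.subtype (πG w) = w := fun w hw =>
    congrArg Subtype.val (LinearMap.congr_fun hπG ⟨w, hw⟩)
  refine ⟨map πF πG x, ?_⟩
  rw [mapIncl, ← LinearMap.comp_apply, ← map_comp]
  refine ext_sliceRight fun l => ?_
  rw [sliceRight_map, LinearMap.comp_apply, hF _ (LinearMap.mem_range_self _ _), ← sub_eq_zero]
  refine (Module.forall_dual_apply_eq_zero_iff K _).mp fun φ => ?_
  rw [map_sub, sub_eq_zero, apply_sliceRight, apply_sliceRight, LinearMap.comp_apply,
    LinearMap.comp_apply, hG _ (LinearMap.mem_range_self _ _)]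

lemma range_sliceLeft_eq_top_of_le {V₁ W₁ : Submodule K V} {y : V₁ ⊗[K] W₁}
    (h : W₁ ≤ LinearMap.range (sliceLeft (mapIncl V₁ W₁ y))) :
    LinearMap.range (sliceLeft y) = ⊤ := by
  rw [eq_top_iff]
  rintro w -
  obtain ⟨v, hv, hvw⟩ := range_sliceLeft_map_le _ _ y (h w.2)
  rwa [← Subtype.ext hvw]

lemma injective_sliceRight_of_range_sliceLeft_eq_top {x : V ⊗[K] W}
    (h : LinearMap.range (sliceLeft x) = ⊤) : Function.Injective (sliceRight x) := by
  rw [← LinearMap.ker_eq_bot, eq_bot_iff]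
  intro l hl
  ext w
  obtain ⟨φ, rfl⟩ : w ∈ LinearMap.range (sliceLeft x) := h ▸ Submodule.mem_top
  rw [← apply_sliceRight, LinearMap.mem_ker.mp hl, map_zero, LinearMap.zero_apply]

lemma bijective_sliceRight {V₁ : Submodule K V} [FiniteDimensional K V₁] {y : V₁ ⊗[K] V₁}
    (h : V₁ ≤ LinearMap.range (sliceLeft (mapIncl V₁ V₁ y))) :
    Function.Bijective (sliceRight y) := by
  have hinj := injective_sliceRight_of_range_sliceLeft_eq_top (range_sliceLeft_eq_top_of_le h)
  exact ⟨hinj, (LinearMap.injective_iff_surjective_of_finrank_eq_finrank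
    Subspace.dual_finrank_eq).mp hinj⟩

end Field

end TensorProduct

lemma Submodule.eq_map_of_le_map {K V : Type*} [Field K] [AddCommGroup V] [Module K V]
    {p : Submodule K V} [FiniteDimensional K p] {f : V →ₗ[K] V} (h : p ≤ p.map f) :
    p = p.map f :=
  Submodule.eq_of_le_of_finrank_le h (Submodule.finrank_map_le f p)

open TensorProduct Coalgebra

section Hopf

variable {k H}

abbrev idIdε : H ⊗[k] (H ⊗[k] H) →ₐ[k] H ⊗[k] H :=
  Algebra.TensorProduct.map (AlgHom.id k H) (idε k H)

abbrev εIdId : H ⊗[k] (H ⊗[k] H) →ₐ[k] H ⊗[k] H :=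
  (Algebra.TensorProduct.lid k (H ⊗[k] H)).toAlgHom.comp
    (Algebra.TensorProduct.map (Bialgebra.counitAlgHom k H) (AlgHom.id k (H ⊗[k] H)))

/-- `a ⊗ b ⊗ c ↦ S(a) b ⊗ c`. -/
abbrev μSidId : H ⊗[k] (H ⊗[k] H) →ₗ[k] H ⊗[k] H :=
  LinearMap.rTensor H (LinearMap.mul' k H ∘ₗ Sid k H) ∘ₗ
    (TensorProduct.assoc k H H H).symm.toLinearMap

lemma Δid_tmul (a b : H) : Δid k H (a ⊗ₜ[k] b) =
    ∑ i ∈ (ℛ k a).index, (ℛ k a).left i ⊗ₜ[k] ((ℛ k a).right i ⊗ₜ[k] b) := by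
  simp [← (ℛ k a).eq, sum_tmul]

lemma idε_comul (a : H) : idε k H (comul a) = a := by
  change TensorProduct.rid k H (counit.lTensor H (comul a)) = a
  simp

lemma idIdε_idΔ (x : H ⊗[k] H) : idIdε (idΔ k H x) = x := by
  induction x using TensorProduct.induction_on with
  | zero => simp
  | add x y hx hy => rw [map_add, map_add, hx, hy]
  | tmul a b => simp [idε_comul]

lemma idIdε_ι₁₃ (x : H ⊗[k] H) : idIdε (ι₁₃ k H x) = idε k H x ⊗ₜ[k] 1 := by
  induction x using TensorProduct.induction_on with
  | zero => simp
  | add x y hx hy => rw [map_add, map_add, hx, hy, map_add, add_tmul]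
  | tmul a b => simp [smul_tmul']

lemma idIdε_ι₁₂ (x : H ⊗[k] H) : idIdε (ι₁₂ k H x) = x := by
  induction x using TensorProduct.induction_on with
  | zero => simp
  | add x y hx hy => rw [map_add, map_add, hx, hy]
  | tmul a b => simp

lemma εIdId_Δid (x : H ⊗[k] H) : εIdId (Δid k H x) = x := by
  induction x using TensorProduct.induction_on with
  | zero => simp
  | add x y hx hy => rw [map_add, map_add, hx, hy]
  | tmul a b =>
    rw [Δid_tmul]
    simp [smul_tmul', ← sum_tmul, sum_counit_smul]

lemma εIdId_ι₁₃ (x : H ⊗[k] H) : εIdId (ι₁₃ k H x) = 1 ⊗ₜ[k] εid k H x := by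
  induction x using TensorProduct.induction_on with
  | zero => simp
  | add x y hx hy => rw [map_add, map_add, hx, hy, map_add, tmul_add]
  | tmul a b => simp [smul_tmul']

lemma εIdId_ι₂₃ (x : H ⊗[k] H) : εIdId (ι₂₃ k H x) = x := by
  induction x using TensorProduct.induction_on with
  | zero => simp
  | add x y hx hy => rw [map_add, map_add, hx, hy]
  | tmul a b => simp

lemma μSidId_Δid (x : H ⊗[k] H) : μSidId (Δid k H x) = 1 ⊗ₜ[k] εid k H x := by
  induction x using TensorProduct.induction_on with
  | zero => simp
  | add x y hx hy => rw [map_add, map_add, hx, hy, map_add, tmul_add]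
  | tmul a b =>
    rw [Δid_tmul]
    simp [← sum_tmul, HopfAlgebra.sum_antipode_mul_eq_smul, smul_tmul]

lemma μSidId_ι₁₃_mul_ι₂₃ (x y : H ⊗[k] H) :
    μSidId (ι₁₃ k H x * ι₂₃ k H y) = Sid k H x * y := by
  induction x using TensorProduct.induction_on with
  | zero => simp
  | add x x' hx hx' => simp only [map_add, add_mul, hx, hx']
  | tmul a b =>
    induction y using TensorProduct.induction_on with
    | zero => simp
    | add y y' hy hy' => simp only [map_add, mul_add, hy, hy']
    | tmul c d => simp [Algebra.TensorProduct.tmul_mul_tmul]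

lemma sliceRight_idΔ (x : H ⊗[k] H) (Q : Module.Dual k (H ⊗[k] H)) :
    sliceRight (idΔ k H x) Q = sliceRight x (Q ∘ₗ comul) := by
  induction x using TensorProduct.induction_on with
  | zero => simp
  | tmul a b => simp
  | add x y hx hy => simp [hx, hy]

lemma sliceRight_ι₁₃_mul_ι₁₂ (x y : H ⊗[k] H) (l l' : Module.Dual k H) :
    sliceRight (ι₁₃ k H x * ι₁₂ k H y) (LinearMap.mul' k k ∘ₗ map l' l) =
      sliceRight x l * sliceRight y l' := by
  induction x using TensorProduct.induction_on with
  | zero => simp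
  | add x x' hx hx' =>
    simp only [map_add, add_mul, sliceRight_add, LinearMap.add_apply, hx, hx']
  | tmul a b =>
    induction y using TensorProduct.induction_on with
    | zero => simp
    | add y y' hy hy' =>
      simp only [map_add, mul_add, sliceRight_add, LinearMap.add_apply, hy, hy']
    | tmul c d => simp [Algebra.TensorProduct.tmul_mul_tmul, smul_smul, mul_comm]

lemma comul_sliceRight (x : H ⊗[k] H) (l : Module.Dual k H) :
    comul (sliceRight x l) = LinearMap.lTensor H (evR k H l) (Δid k H x) := by
  induction x using TensorProduct.induction_on with
  | zero => simp
  | add x y hx hy => simp only [sliceRight_add, LinearMap.add_apply, map_add, hx, hy]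
  | tmul a b =>
    rw [Δid_tmul, sliceRight_tmul, map_smul, ← (ℛ k a).eq]
    simp [evR, Finset.smul_sum, tmul_smul]

lemma lTensor_evR_ι₁₃_mul_ι₂₃_mem (P Q : Submodule k H) (x y : P ⊗[k] Q)
    (l : Module.Dual k H) :
    LinearMap.lTensor H (evR k H l) (ι₁₃ k H (mapIncl P Q x) * ι₂₃ k H (mapIncl P Q y)) ∈
      LinearMap.range (mapIncl P P) := by
  induction x using TensorProduct.induction_on with
  | zero => simp
  | add x x' hx hx' => simpa only [map_add, add_mul] using add_mem hx hx'
  | tmul p q =>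
    induction y using TensorProduct.induction_on with
    | zero => simp
    | add y y' hy hy' => simpa only [map_add, mul_add] using add_mem hy hy'
    | tmul p' q' =>
      refine ⟨l (q * q') • (p ⊗ₜ[k] p'), ?_⟩
      simp [evR, Algebra.TensorProduct.tmul_mul_tmul, tmul_smul]

variable {R : H ⊗[k] H}

lemma idε_eq_one (hR : IsUnit R) (hΔ₂ : idΔ k H R = ι₁₃ k H R * ι₁₂ k H R) :
    idε k H R = 1 := by
  have h : (idε k H R ⊗ₜ[k] 1) * R = R :=
    calc (idε k H R ⊗ₜ[k] 1) * R = idIdε (ι₁₃ k H R) * idIdε (ι₁₂ k H R) := by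
          rw [idIdε_ι₁₃, idIdε_ι₁₂]
      _ = R := by rw [← map_mul, ← hΔ₂, idIdε_idΔ]
  simpa using congrArg (idε k H) ((hR.mul_eq_right).mp h)

lemma εid_eq_one (hR : IsUnit R) (hΔ₁ : Δid k H R = ι₁₃ k H R * ι₂₃ k H R) :
    εid k H R = 1 := by
  have h : ((1 : H) ⊗ₜ[k] εid k H R) * R = R :=
    calc ((1 : H) ⊗ₜ[k] εid k H R) * R = εIdId (ι₁₃ k H R) * εIdId (ι₂₃ k H R) := by
          rw [εIdId_ι₁₃, εIdId_ι₂₃]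
      _ = R := by rw [← map_mul, ← hΔ₁, εIdId_Δid]
  simpa using congrArg (εid k H) ((hR.mul_eq_right).mp h)

lemma Sid_mul_self (hΔ₁ : Δid k H R = ι₁₃ k H R * ι₂₃ k H R) :
    Sid k H R * R = 1 ⊗ₜ[k] εid k H R := by
  rw [← μSidId_ι₁₃_mul_ι₂₃, ← hΔ₁, μSidId_Δid]

lemma sliceRight_mul_sliceRight (hΔ₂ : idΔ k H R = ι₁₃ k H R * ι₁₂ k H R)
    (l l' : Module.Dual k H) :
    sliceRight R l * sliceRight R l' = sliceRight R (LinearMap.mul' k k ∘ₗ map l' l ∘ₗ comul) := by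
  rw [← sliceRight_ι₁₃_mul_ι₁₂, ← hΔ₂, sliceRight_idΔ, LinearMap.comp_assoc]

lemma range_sliceLeft_eq_map_antipode (hS : Sid k H R = τ k H R) :
    LinearMap.range (sliceLeft R) =
      (LinearMap.range (sliceRight R)).map (HopfAlgebra.antipode k) := by
  rw [← sliceRight_comm, ← LinearMap.range_comp, ← sliceRight_rTensor]
  exact congrArg (fun x => LinearMap.range (sliceRight x)) hS.symm

lemma range_sliceRight_le_range_sliceLeft (hS : Sid k H R = τ k H R) :
    LinearMap.range (sliceRight R) ≤ LinearMap.range (sliceLeft R) := by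
  rintro _ ⟨l, rfl⟩
  refine ⟨l ∘ₗ HopfAlgebra.antipode k, ?_⟩
  rw [← sliceLeft_rTensor, ← sliceLeft_comm R]
  exact congrArg (fun x => sliceLeft x l) hS

end Hopf

/-- For a unitary universal R-matrix `R`, the image `F = H_l` of `α(l) = (id ⊗ l)(R)` is a
Hopf subalgebra (closed under multiplication, comultiplication and antipode, containing 1)
with `R ∈ F ⊗ F`, and `R` is nondegenerate on `F`: the induced map `F* → F` is bijective. -/
theorem unitary_RMatrix_nondegenerate_on_image {k H : Type*} [Field k] [Ring H]
    [HopfAlgebra k H] (R : H ⊗[k] H) (hR : IsUnivRMatrix k H R) (hU : R * τ k H R = 1) :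
    ((1 : H) ∈ Hl k H R ∧ ∀ x ∈ Hl k H R, ∀ y ∈ Hl k H R, x * y ∈ Hl k H R) ∧
    (∀ x ∈ Hl k H R, Coalgebra.comul (R := k) x ∈
      LinearMap.range (TensorProduct.mapIncl
        (Submodule.span k (Hl k H R)) (Submodule.span k (Hl k H R)))) ∧
    (∀ x ∈ Hl k H R, HopfAlgebra.antipode (R := k) x ∈ Hl k H R) ∧
    (∃ R' : (Submodule.span k (Hl k H R)) ⊗[k] (Submodule.span k (Hl k H R)),
      TensorProduct.mapIncl _ _ R' = R ∧
      Function.Bijective (fun m : (Submodule.span k (Hl k H R)) →ₗ[k] k =>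
        (TensorProduct.rid k (Submodule.span k (Hl k H R)))
          (LinearMap.lTensor _ m R'))) := by
  obtain ⟨hRu, -, hΔ₂, hΔ₁⟩ := hR
  have hS : Sid k H R = τ k H R :=
    left_inv_eq_right_inv
      (by rw [Sid_mul_self hΔ₁, εid_eq_one hRu hΔ₁, Algebra.TensorProduct.one_def]) hU
  have hHl : Hl k H R = LinearMap.range (sliceRight R) := rfl
  rw [hHl, Submodule.span_eq]
  set F := LinearMap.range (sliceRight R)
  have hSF : F = F.map (HopfAlgebra.antipode k) :=
    Submodule.eq_map_of_le_map ((range_sliceRight_le_range_sliceLeft hS).trans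
      (range_sliceLeft_eq_map_antipode hS).le)
  have hGF : LinearMap.range (sliceLeft R) = F :=
    (range_sliceLeft_eq_map_antipode hS).trans hSF.symm
  obtain ⟨R', hR'⟩ : R ∈ LinearMap.range (mapIncl F F) := by
    have h := mem_range_mapIncl_range_slice R
    rwa [hGF] at h
  refine ⟨⟨⟨counit, idε_eq_one hRu hΔ₂⟩, ?_⟩, ?_, ?_,
    R', hR', bijective_sliceRight (hR' ▸ hGF.ge)⟩
  · rintro _ ⟨l, rfl⟩ _ ⟨l', rfl⟩
    exact ⟨_, (sliceRight_mul_sliceRight hΔ₂ l l').symm⟩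
  · rintro _ ⟨l, rfl⟩
    rw [comul_sliceRight, hΔ₁, ← hR']
    exact lTensor_evR_ι₁₃_mul_ι₂₃_mem F F R' R' l
  · intro x hx
    exact hSF ▸ Submodule.mem_map_of_mem hx
end
end

section
/- Let k be an algebraically closed field of characteristic zero, G a group, A a finite abelian group, and i : A → G an injective group homomorphism with normal image. Suppose φ : G → Aut(A) is a group homomorphism such that g·i(a)·g⁻¹ = i(φ_g(a)) for all g ∈ G and a ∈ A, and let β : Â × Â → kˣ be a bimultiplicative, nondegenerate, G-invariant (β(χ∘φ_g, ξ∘φ_g) = β(χ,ξ)) and skewsymmetric form. Then the element R = |A|⁻² · Σ_{a,b∈A} Σ_{χ,ξ∈Â} β(χ,ξ)·χ(a)·ξ(b) · (i(a) ⊗ i(b)) is a unitary universal R-matrix on k[G]: it is a universal R-matrix and satisfies R·τ(R) = 1. -/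
open scoped TensorProduct

noncomputable section

variable (k G : Type*) [Field k] [Group G]

/-- The comultiplication `Δ(g) = g ⊗ g` of the group algebra `k[G]`, as an algebra map. -/
def gComul : MonoidAlgebra k G →ₐ[k] MonoidAlgebra k G ⊗[k] MonoidAlgebra k G :=
  MonoidAlgebra.lift k _ G
    { toFun := fun g => MonoidAlgebra.of k G g ⊗ₜ[k] MonoidAlgebra.of k G g
      map_one' := by rw [Algebra.TensorProduct.one_def]; simp [MonoidAlgebra.one_def]
      map_mul' := fun g h => by simp [Algebra.TensorProduct.tmul_mul_tmul] }

/-- The flip of the tensor square of the group algebra. -/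
abbrev gτ : MonoidAlgebra k G ⊗[k] MonoidAlgebra k G →ₐ[k]
    MonoidAlgebra k G ⊗[k] MonoidAlgebra k G :=
  (Algebra.TensorProduct.comm k (MonoidAlgebra k G) (MonoidAlgebra k G)).toAlgHom

/-- `x ⊗ y ↦ x ⊗ y ⊗ 1`. -/
abbrev gι₁₂ : MonoidAlgebra k G ⊗[k] MonoidAlgebra k G →ₐ[k]
    MonoidAlgebra k G ⊗[k] (MonoidAlgebra k G ⊗[k] MonoidAlgebra k G) :=
  Algebra.TensorProduct.map (AlgHom.id k _) Algebra.TensorProduct.includeLeft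

/-- `x ⊗ y ↦ x ⊗ 1 ⊗ y`. -/
abbrev gι₁₃ : MonoidAlgebra k G ⊗[k] MonoidAlgebra k G →ₐ[k]
    MonoidAlgebra k G ⊗[k] (MonoidAlgebra k G ⊗[k] MonoidAlgebra k G) :=
  Algebra.TensorProduct.map (AlgHom.id k _) Algebra.TensorProduct.includeRight

/-- `x ⊗ y ↦ 1 ⊗ x ⊗ y`. -/
abbrev gι₂₃ : MonoidAlgebra k G ⊗[k] MonoidAlgebra k G →ₐ[k]
    MonoidAlgebra k G ⊗[k] (MonoidAlgebra k G ⊗[k] MonoidAlgebra k G) :=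
  Algebra.TensorProduct.includeRight

/-- `id ⊗ Δ`. -/
abbrev gidΔ : MonoidAlgebra k G ⊗[k] MonoidAlgebra k G →ₐ[k]
    MonoidAlgebra k G ⊗[k] (MonoidAlgebra k G ⊗[k] MonoidAlgebra k G) :=
  Algebra.TensorProduct.map (AlgHom.id k _) (gComul k G)

/-- `Δ ⊗ id`, re-associated. -/
abbrev gΔid : MonoidAlgebra k G ⊗[k] MonoidAlgebra k G →ₐ[k]
    MonoidAlgebra k G ⊗[k] (MonoidAlgebra k G ⊗[k] MonoidAlgebra k G) :=
  (Algebra.TensorProduct.assoc k k k _ _ _).toAlgHom.comp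
    (Algebra.TensorProduct.map (gComul k G) (AlgHom.id k _))

/-- `R` is a universal R-matrix (quasitriangular structure) on the group algebra `k[G]`. -/
def IsGroupRMatrix (R : MonoidAlgebra k G ⊗[k] MonoidAlgebra k G) : Prop :=
  IsUnit R ∧
  (∀ h : MonoidAlgebra k G, R * gτ k G (gComul k G h) = gComul k G h * R) ∧
  gidΔ k G R = gι₁₃ k G R * gι₁₂ k G R ∧
  gΔid k G R = gι₁₃ k G R * gι₂₃ k G R


/-!
Since `|A|` is invertible in `k` and `k` contains enough roots of unity, the elements
`e_χ = |A|⁻¹ Σ_a χ(a) i(a)`, `χ ∈ Â`, form a complete family of orthogonal idempotents of `k[G]`,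
with `Δ(e_ξ) = Σ_{χψ = ξ} e_χ ⊗ e_ψ` and `g e_{χ ∘ φ_g} g⁻¹ = e_χ`. In this basis
`R = Σ β(χ,ξ) e_χ ⊗ e_ξ`, and `R`, `τ(R)`, `R₁₂`, `R₁₃`, `R₂₃`, `(id ⊗ Δ)(R)`, `(Δ ⊗ id)(R)` are
all "diagonal", so their products are computed pointwise on `Â²` and `Â³`: the two hexagon
identities become bimultiplicativity of `β`, `R τ(R) = 1` becomes skewsymmetry, and
`R Δ(g) = Δ(g) R` (note `τ Δ(g) = Δ(g)`) becomes `G`-invariance.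
-/

open MonoidAlgebra

namespace OrthogonalIdempotents

variable {R B C ι κ : Type*} [CommSemiring R] [Semiring B] [Semiring C] [Algebra R B]
  [Algebra R C] {e : ι → B} {f : κ → C}

theorem sum_smul_mul_sum_smul [Fintype ι] (he : OrthogonalIdempotents e) (c d : ι → R) :
    (∑ i, c i • e i) * (∑ i, d i • e i) = ∑ i, (c i * d i) • e i := by
  classical
  simp_rw [Finset.sum_mul_sum, smul_mul_smul_comm, he.mul_eq, smul_ite, smul_zero,
    Finset.sum_ite_eq, Finset.mem_univ, if_true]

theorem tmul (he : OrthogonalIdempotents e) (hf : OrthogonalIdempotents f) :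
    OrthogonalIdempotents (fun p : ι × κ => e p.1 ⊗ₜ[R] f p.2) where
  idem p := by
    rw [IsIdempotentElem, Algebra.TensorProduct.tmul_mul_tmul, (he.idem _).eq, (hf.idem _).eq]
  ortho p q hpq := by
    simp only [Algebra.TensorProduct.tmul_mul_tmul]
    by_cases h : p.1 = q.1
    · rw [hf.ortho fun h' => hpq (Prod.ext h h'), TensorProduct.tmul_zero]
    · rw [he.ortho h, TensorProduct.zero_tmul]

end OrthogonalIdempotents

theorem CompleteOrthogonalIdempotents.tmul {R B C ι κ : Type*} [CommSemiring R] [Semiring B]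
    [Semiring C] [Algebra R B] [Algebra R C] [Fintype ι] [Fintype κ] {e : ι → B} {f : κ → C}
    (he : CompleteOrthogonalIdempotents e) (hf : CompleteOrthogonalIdempotents f) :
    CompleteOrthogonalIdempotents (fun p : ι × κ => e p.1 ⊗ₜ[R] f p.2) where
  toOrthogonalIdempotents := he.1.tmul hf.1
  complete := by
    rw [Fintype.sum_prod_type, Algebra.TensorProduct.one_def, ← he.complete, ← hf.complete,
      TensorProduct.sum_tmul]
    simp only [TensorProduct.tmul_sum]

variable {k G}

theorem gComul_of (g : G) : gComul k G (of k G g) = of k G g ⊗ₜ of k G g :=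
  MonoidAlgebra.lift_of _ _

theorem mul_gτ_gComul_of_commute {x : MonoidAlgebra k G ⊗[k] MonoidAlgebra k G}
    (hx : ∀ g, Commute (of k G g ⊗ₜ of k G g) x) (h : MonoidAlgebra k G) :
    x * gτ k G (gComul k G h) = gComul k G h * x := by
  induction h using MonoidAlgebra.induction_on with
  | of g => rw [gComul_of]; exact (hx g).eq.symm
  | add f h hf hh => simp only [map_add, mul_add, add_mul, hf, hh]
  | smul r f hf => simp only [map_smul, mul_smul_comm, smul_mul_assoc, hf]

section Characters

variable {A : Type*} [CommGroup A] [Fintype A]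

theorem sum_character_apply [DecidableEq (A →* kˣ)] (χ : A →* kˣ) :
    ∑ a, (χ a : k) = if χ = 1 then (Fintype.card A : k) else 0 := by
  split_ifs with hχ
  · simp [hχ]
  · refine sum_hom_units_eq_zero ((Units.coeHom k).comp χ) fun h => hχ ?_
    ext a
    simpa using DFunLike.congr_fun h a

theorem sum_character_apply_mul_apply_inv [DecidableEq (A →* kˣ)] (χ ψ : A →* kˣ) :
    ∑ a, (χ a : k) * (ψ a⁻¹ : k) = if χ = ψ then (Fintype.card A : k) else 0 := by
  simp_rw [← mul_inv_eq_one (a := χ), ← sum_character_apply, MonoidHom.mul_apply,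
    MonoidHom.inv_apply, map_inv, Units.val_mul]

theorem sum_characters_apply [Fintype (A →* kˣ)] [HasEnoughRootsOfUnity k (Monoid.exponent A)]
    [DecidableEq A] (a : A) :
    ∑ χ : A →* kˣ, (χ a : k) = if a = 1 then (Fintype.card A : k) else 0 := by
  split_ifs with ha
  · simp [ha, ← Nat.card_eq_fintype_card, CommGroup.card_monoidHom_of_hasEnoughRootsOfUnity]
  · refine sum_hom_units_eq_zero ((Units.coeHom k).comp (MonoidHom.eval a)) fun h => ?_
    obtain ⟨χ, hχ⟩ := CommGroup.exists_apply_ne_one_of_hasEnoughRootsOfUnity A k ha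
    exact hχ (Units.ext (by simpa using DFunLike.congr_fun h χ))

variable (k) (i : A →* G)

/-- The sign convention (`χ a` rather than `χ a⁻¹`) is the one for which the `R`-matrix reads
`Σ β(χ,ξ) e_χ ⊗ e_ξ`. -/
def charIdempotent (χ : A →* kˣ) : MonoidAlgebra k G :=
  (Fintype.card A : k)⁻¹ • ∑ a, (χ a : k) • of k G (i a)

variable {k}

theorem of_mul_charIdempotent (a : A) (χ : A →* kˣ) :
    of k G (i a) * charIdempotent k i χ = (χ a⁻¹ : k) • charIdempotent k i χ := by
  have shift : ∑ b, (χ b : k) • of k G (i (a * b)) = ∑ b, (χ (a⁻¹ * b) : k) • of k G (i b) :=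
    Fintype.sum_equiv (Equiv.mulLeft a) _ _ fun b => by simp
  simp_rw [charIdempotent, mul_smul_comm, Finset.mul_sum, mul_smul_comm, ← map_mul, shift,
    map_mul, Units.val_mul, mul_smul, ← Finset.smul_sum]
  exact smul_comm _ _ _

theorem sum_smul_of_mul_charIdempotent (c : A → k) (χ : A →* kˣ) :
    (∑ a, c a • of k G (i a)) * charIdempotent k i χ
      = (∑ a, c a * (χ a⁻¹ : k)) • charIdempotent k i χ := by
  simp only [Finset.sum_mul, smul_mul_assoc, of_mul_charIdempotent, smul_smul, Finset.sum_smul]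

theorem of_mul_charIdempotent_comp {g : G} {σ : MulAut A} (hσ : ∀ a, g * i a * g⁻¹ = i (σ a))
    (χ : A →* kˣ) :
    of k G g * charIdempotent k i (χ.comp σ.toMonoidHom) = charIdempotent k i χ * of k G g := by
  have hcomm (a : A) : of k G g * of k G (i a) = of k G (i (σ a)) * of k G g := by
    rw [← map_mul, ← map_mul, ← hσ a, inv_mul_cancel_right]
  simp only [charIdempotent, mul_smul_comm, smul_mul_assoc, Finset.mul_sum, Finset.sum_mul, hcomm,
    MonoidHom.comp_apply, MulEquiv.coe_toMonoidHom]
  congr 1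
  exact Fintype.sum_equiv σ.toEquiv _ _ fun a => rfl

section Orthogonality

variable [NeZero (Fintype.card A : k)]

theorem sum_smul_of_eq_card_smul_charIdempotent (χ : A →* kˣ) :
    ∑ a, (χ a : k) • of k G (i a) = (Fintype.card A : k) • charIdempotent k i χ :=
  (smul_inv_smul₀ (NeZero.ne _) _).symm

theorem charIdempotent_mul [DecidableEq (A →* kˣ)] (χ ψ : A →* kˣ) :
    charIdempotent k i χ * charIdempotent k i ψ = if χ = ψ then charIdempotent k i ψ else 0 := by
  rw [charIdempotent, smul_mul_assoc, sum_smul_of_mul_charIdempotent,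
    sum_character_apply_mul_apply_inv, smul_smul]
  split_ifs
  · rw [inv_mul_cancel₀ (NeZero.ne _), one_smul]
  · rw [mul_zero, zero_smul]

theorem orthogonalIdempotents_charIdempotent : OrthogonalIdempotents (charIdempotent k i) := by
  classical
  refine ⟨fun χ => ?_, fun χ ψ h => ?_⟩
  · rw [IsIdempotentElem, charIdempotent_mul, if_pos rfl]
  · exact (charIdempotent_mul i χ ψ).trans (if_neg h)

theorem gComul_charIdempotent_mul_tmul [DecidableEq (A →* kˣ)] (ξ χ ψ : A →* kˣ) :
    gComul k G (charIdempotent k i ξ) * (charIdempotent k i χ ⊗ₜ charIdempotent k i ψ)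
      = if ξ = χ * ψ then charIdempotent k i χ ⊗ₜ charIdempotent k i ψ else 0 := by
  have comul : gComul k G (charIdempotent k i ξ)
      = (Fintype.card A : k)⁻¹ • ∑ a, (ξ a : k) • (of k G (i a) ⊗ₜ of k G (i a)) := by
    simp only [charIdempotent, map_smul, map_sum, gComul_of]
  have coeff (a : A) : (ξ a : k) * ((χ a⁻¹ : k) * (ψ a⁻¹ : k)) = ξ a * ((χ * ψ) a⁻¹ : k) := by
    simp
  simp_rw [comul, smul_mul_assoc, Finset.sum_mul, smul_mul_assoc,
    Algebra.TensorProduct.tmul_mul_tmul, of_mul_charIdempotent, TensorProduct.smul_tmul_smul,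
    smul_smul, ← Finset.sum_smul, coeff, sum_character_apply_mul_apply_inv, smul_smul]
  split_ifs
  · rw [inv_mul_cancel₀ (NeZero.ne _), one_smul]
  · rw [mul_zero, zero_smul]

end Orthogonality

variable [Fintype (A →* kˣ)]

def charTensor₂ (c : (A →* kˣ) → (A →* kˣ) → k) : MonoidAlgebra k G ⊗[k] MonoidAlgebra k G :=
  ∑ χ, ∑ ξ, c χ ξ • (charIdempotent k i χ ⊗ₜ charIdempotent k i ξ)

def charTensor₃ (c : (A →* kˣ) → (A →* kˣ) → (A →* kˣ) → k) :
    MonoidAlgebra k G ⊗[k] (MonoidAlgebra k G ⊗[k] MonoidAlgebra k G) :=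
  ∑ χ, ∑ ψ, ∑ ξ, c χ ψ ξ • (charIdempotent k i χ ⊗ₜ (charIdempotent k i ψ ⊗ₜ charIdempotent k i ξ))

theorem gτ_charTensor₂ (c : (A →* kˣ) → (A →* kˣ) → k) :
    gτ k G (charTensor₂ i c) = charTensor₂ i (fun χ ξ => c ξ χ) := by
  simp only [charTensor₂, map_sum, map_smul]
  exact Finset.sum_comm

theorem commute_of_tmul_of_charTensor₂ {g : G} {σ : MulAut A}
    (hσ : ∀ a, g * i a * g⁻¹ = i (σ a)) (c : (A →* kˣ) → (A →* kˣ) → k)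
    (hc : ∀ χ ξ, c (χ.comp σ.toMonoidHom) (ξ.comp σ.toMonoidHom) = c χ ξ) :
    Commute (of k G g ⊗ₜ of k G g) (charTensor₂ i c) := by
  let precomp := MulEquiv.monoidHomCongrLeftEquiv (N := kˣ) σ.symm
  rw [commute_iff_eq, charTensor₂, Finset.mul_sum, Finset.sum_mul, ← precomp.sum_comp]
  refine Finset.sum_congr rfl fun χ _ => ?_
  rw [Finset.mul_sum, Finset.sum_mul, ← precomp.sum_comp]
  refine Finset.sum_congr rfl fun ξ _ => ?_
  simp only [precomp, MulEquiv.monoidHomCongrLeftEquiv_apply, MulEquiv.symm_symm, hc,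
    mul_smul_comm, smul_mul_assoc, Algebra.TensorProduct.tmul_mul_tmul,
    of_mul_charIdempotent_comp i hσ]

variable [NeZero (Fintype.card A : k)]

theorem charTensor₂_mul (c d : (A →* kˣ) → (A →* kˣ) → k) :
    charTensor₂ i c * charTensor₂ i d = charTensor₂ i (fun χ ξ => c χ ξ * d χ ξ) := by
  have he := orthogonalIdempotents_charIdempotent (k := k) i
  simp only [charTensor₂, ← Fintype.sum_prod_type']
  exact (he.tmul (R := k) he).sum_smul_mul_sum_smul (fun p => c p.1 p.2) (fun p => d p.1 p.2)

theorem charTensor₃_mul (c d : (A →* kˣ) → (A →* kˣ) → (A →* kˣ) → k) :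
    charTensor₃ i c * charTensor₃ i d = charTensor₃ i (fun χ ψ ξ => c χ ψ ξ * d χ ψ ξ) := by
  have he := orthogonalIdempotents_charIdempotent (k := k) i
  simp only [charTensor₃, ← Fintype.sum_prod_type']
  exact (he.tmul (R := k) (he.tmul (R := k) he)).sum_smul_mul_sum_smul
    (fun p => c p.1 p.2.1 p.2.2) (fun p => d p.1 p.2.1 p.2.2)

theorem inv_card_sq_smul_finsum_eq_charTensor₂ (c : (A →* kˣ) → (A →* kˣ) → k) :
    ((Fintype.card A : k) ^ 2)⁻¹ •
        ∑ᶠ χ : A →* kˣ, ∑ᶠ ξ : A →* kˣ, ∑ a : A, ∑ b : A,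
          (c χ ξ * (χ a : k) * (ξ b : k)) • (of k G (i a) ⊗ₜ[k] of k G (i b))
      = charTensor₂ i c := by
  have inner (χ ξ : A →* kˣ) :
      ∑ a, ∑ b, (c χ ξ * (χ a : k) * (ξ b : k)) • (of k G (i a) ⊗ₜ[k] of k G (i b))
        = ((Fintype.card A : k) ^ 2 * c χ ξ) • (charIdempotent k i χ ⊗ₜ charIdempotent k i ξ) := by
    have term (a b : A) : (c χ ξ * (χ a : k) * (ξ b : k)) • (of k G (i a) ⊗ₜ[k] of k G (i b))
        = c χ ξ • (((χ a : k) • of k G (i a)) ⊗ₜ ((ξ b : k) • of k G (i b))) := by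
      rw [TensorProduct.smul_tmul_smul, smul_smul, mul_assoc]
    calc _ = c χ ξ • ((∑ a, (χ a : k) • of k G (i a)) ⊗ₜ (∑ b, (ξ b : k) • of k G (i b))) := by
          rw [TensorProduct.sum_tmul, Finset.smul_sum]
          simp only [TensorProduct.tmul_sum, Finset.smul_sum, term]
      _ = _ := by
          rw [sum_smul_of_eq_card_smul_charIdempotent, sum_smul_of_eq_card_smul_charIdempotent,
            TensorProduct.smul_tmul_smul, smul_smul, sq, mul_comm]
  simp only [finsum_eq_sum_of_fintype, inner, Finset.smul_sum, smul_smul,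
    inv_mul_cancel_left₀ (pow_ne_zero 2 (NeZero.ne (Fintype.card A : k))), charTensor₂]

variable [HasEnoughRootsOfUnity k (Monoid.exponent A)]

theorem sum_charIdempotent : ∑ χ : A →* kˣ, charIdempotent k i χ = 1 := by
  classical
  simp only [charIdempotent, ← Finset.smul_sum]
  rw [Finset.sum_comm]
  simp only [← Finset.sum_smul, sum_characters_apply, ite_smul, zero_smul, Finset.sum_ite_eq',
    Finset.mem_univ, if_true]
  rw [map_one, map_one, smul_smul, inv_mul_cancel₀ (NeZero.ne _), one_smul]

theorem completeOrthogonalIdempotents_charIdempotent :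
    CompleteOrthogonalIdempotents (charIdempotent k i) :=
  ⟨orthogonalIdempotents_charIdempotent i, sum_charIdempotent i⟩

theorem gComul_charIdempotent (ξ : A →* kˣ) :
    gComul k G (charIdempotent k i ξ)
      = ∑ χ, charIdempotent k i χ ⊗ₜ charIdempotent k i (χ⁻¹ * ξ) := by
  classical
  have complete := ((completeOrthogonalIdempotents_charIdempotent (k := k) (G := G) i).tmul
    (R := k) (completeOrthogonalIdempotents_charIdempotent (k := k) (G := G) i)).complete
  have cond (χ ψ : A →* kˣ) : ξ = χ * ψ ↔ χ⁻¹ * ξ = ψ :=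
    ⟨fun h => h ▸ inv_mul_cancel_left χ ψ, fun h => h ▸ (mul_inv_cancel_left χ ξ).symm⟩
  rw [← mul_one (gComul k G _), ← complete, Finset.mul_sum, Fintype.sum_prod_type]
  simp only [gComul_charIdempotent_mul_tmul, cond, Finset.sum_ite_eq, Finset.mem_univ, if_true]

theorem charTensor₂_one : charTensor₂ i (fun _ _ => (1 : k)) = 1 := by
  simp only [charTensor₂, one_smul, ← TensorProduct.tmul_sum, ← TensorProduct.sum_tmul,
    sum_charIdempotent, Algebra.TensorProduct.one_def]

theorem isUnit_charTensor₂ (c : (A →* kˣ) → (A →* kˣ) → kˣ) :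
    IsUnit (charTensor₂ i fun χ ξ => (c χ ξ : k)) := by
  refine isUnit_iff_exists.mpr ⟨charTensor₂ i fun χ ξ => ((c χ ξ)⁻¹ : kˣ), ?_, ?_⟩ <;>
    simp only [charTensor₂_mul, ← Units.val_mul, mul_inv_cancel, inv_mul_cancel, Units.val_one,
      charTensor₂_one]

theorem gι₁₂_charTensor₂ (c : (A →* kˣ) → (A →* kˣ) → k) :
    gι₁₂ k G (charTensor₂ i c) = charTensor₃ i (fun χ ψ _ => c χ ψ) := by
  simp only [charTensor₂, charTensor₃, map_sum, map_smul, Algebra.TensorProduct.map_tmul,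
    AlgHom.coe_id, id_eq, Algebra.TensorProduct.includeLeft_apply, ← sum_charIdempotent (k := k) i,
    TensorProduct.tmul_sum, Finset.smul_sum]

theorem gι₁₃_charTensor₂ (c : (A →* kˣ) → (A →* kˣ) → k) :
    gι₁₃ k G (charTensor₂ i c) = charTensor₃ i (fun χ _ ξ => c χ ξ) := by
  simp only [charTensor₂, charTensor₃, map_sum, map_smul, Algebra.TensorProduct.map_tmul,
    AlgHom.coe_id, id_eq, Algebra.TensorProduct.includeRight_apply,
    ← sum_charIdempotent (k := k) i, TensorProduct.sum_tmul, TensorProduct.tmul_sum,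
    Finset.smul_sum]
  exact Finset.sum_congr rfl fun χ _ => Finset.sum_comm

theorem gι₂₃_charTensor₂ (c : (A →* kˣ) → (A →* kˣ) → k) :
    gι₂₃ k G (charTensor₂ i c) = charTensor₃ i (fun _ ψ ξ => c ψ ξ) := by
  simp only [charTensor₂, charTensor₃, map_sum, map_smul, Algebra.TensorProduct.includeRight_apply,
    ← sum_charIdempotent (k := k) i, TensorProduct.sum_tmul, Finset.smul_sum]
  exact (Finset.sum_congr rfl fun χ _ => Finset.sum_comm).trans Finset.sum_comm

theorem gidΔ_charTensor₂ (c : (A →* kˣ) → (A →* kˣ) → k) :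
    gidΔ k G (charTensor₂ i c) = charTensor₃ i (fun χ ψ ξ => c χ (ψ * ξ)) := by
  simp only [charTensor₂, charTensor₃, map_sum, map_smul, Algebra.TensorProduct.map_tmul,
    AlgHom.coe_id, id_eq, gComul_charIdempotent, TensorProduct.tmul_sum, Finset.smul_sum]
  refine Finset.sum_congr rfl fun χ _ => ?_
  rw [Finset.sum_comm]
  refine Finset.sum_congr rfl fun ψ _ => ?_
  refine Fintype.sum_equiv (Equiv.mulLeft ψ).symm _ _ fun ξ => ?_
  simp only [Equiv.mulLeft_symm, Equiv.coe_mulLeft, mul_inv_cancel_left]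

theorem gΔid_charTensor₂ (c : (A →* kˣ) → (A →* kˣ) → k) :
    gΔid k G (charTensor₂ i c) = charTensor₃ i (fun χ ψ ξ => c (χ * ψ) ξ) := by
  simp only [charTensor₂, charTensor₃, map_sum, map_smul, AlgHom.comp_apply,
    Algebra.TensorProduct.map_tmul, AlgHom.coe_id, id_eq, gComul_charIdempotent,
    TensorProduct.sum_tmul, Finset.smul_sum, AlgEquiv.coe_toAlgHom,
    Algebra.TensorProduct.assoc_tmul]
  rw [(Finset.sum_congr rfl fun χ _ => Finset.sum_comm).trans Finset.sum_comm]
  refine Finset.sum_congr rfl fun ψ _ => ?_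
  refine Fintype.sum_equiv (Equiv.mulLeft ψ).symm _ _ fun χ => ?_
  simp only [Equiv.mulLeft_symm, Equiv.coe_mulLeft, mul_inv_cancel_left]

end Characters

theorem groupAlgebra_unitary_RMatrix_of_skew_form_general {k : Type*} [Field k] [IsAlgClosed k]
    [CharZero k] {G A : Type*} [Group G] [CommGroup A] [Fintype A]
    (i : A →* G)
    (φ : G →* MulAut A)
    (hiφ : ∀ (g : G) (a : A), g * i a * g⁻¹ = i (φ g a))
    (β : (A →* kˣ) → (A →* kˣ) → kˣ)
    (hβl : ∀ χ χ' ξ, β (χ * χ') ξ = β χ ξ * β χ' ξ)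
    (hβr : ∀ χ ξ ξ', β χ (ξ * ξ') = β χ ξ * β χ ξ')
    (hβskew : ∀ χ ξ, β χ ξ * β ξ χ = 1)
    (hβG : ∀ (g : G) (χ ξ : A →* kˣ),
      β (χ.comp (φ g).toMonoidHom) (ξ.comp (φ g).toMonoidHom) = β χ ξ) :
    IsGroupRMatrix k G
      (((Fintype.card A : k) ^ 2)⁻¹ •
        ∑ᶠ χ : A →* kˣ, ∑ᶠ ξ : A →* kˣ, ∑ a : A, ∑ b : A,
          ((β χ ξ : k) * (χ a : k) * (ξ b : k)) •
            (MonoidAlgebra.of k G (i a) ⊗ₜ[k] MonoidAlgebra.of k G (i b))) ∧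
    (((Fintype.card A : k) ^ 2)⁻¹ •
        ∑ᶠ χ : A →* kˣ, ∑ᶠ ξ : A →* kˣ, ∑ a : A, ∑ b : A,
          ((β χ ξ : k) * (χ a : k) * (ξ b : k)) •
            (MonoidAlgebra.of k G (i a) ⊗ₜ[k] MonoidAlgebra.of k G (i b))) *
      gτ k G (((Fintype.card A : k) ^ 2)⁻¹ •
        ∑ᶠ χ : A →* kˣ, ∑ᶠ ξ : A →* kˣ, ∑ a : A, ∑ b : A,
          ((β χ ξ : k) * (χ a : k) * (ξ b : k)) •
            (MonoidAlgebra.of k G (i a) ⊗ₜ[k] MonoidAlgebra.of k G (i b))) = 1 := by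
  -- together with `IsAlgClosed k`, this yields `HasEnoughRootsOfUnity k (Monoid.exponent A)`
  have : NeZero (Monoid.exponent A : k) := ⟨Nat.cast_ne_zero.mpr Monoid.exponent_ne_zero_of_finite⟩
  have : NeZero (Fintype.card A : k) := ⟨Nat.cast_ne_zero.mpr Fintype.card_ne_zero⟩
  have := Fintype.ofFinite (A →* kˣ)
  have hR := inv_card_sq_smul_finsum_eq_charTensor₂ (G := G) i fun χ ξ => (β χ ξ : k)
  beta_reduce at hR
  rw [hR]
  refine ⟨⟨isUnit_charTensor₂ i β, mul_gτ_gComul_of_commute fun g =>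
      commute_of_tmul_of_charTensor₂ i (hiφ g) _ fun χ ξ => congrArg Units.val (hβG g χ ξ),
      ?_, ?_⟩, ?_⟩
  · rw [gidΔ_charTensor₂, gι₁₃_charTensor₂, gι₁₂_charTensor₂, charTensor₃_mul]
    simp only [hβr, Units.val_mul, mul_comm]
  · rw [gΔid_charTensor₂, gι₁₃_charTensor₂, gι₂₃_charTensor₂, charTensor₃_mul]
    simp only [hβl, Units.val_mul]
  · rw [gτ_charTensor₂, charTensor₂_mul, ← charTensor₂_one i]
    simp only [← Units.val_mul, hβskew, Units.val_one]

/-- A normal inclusion `i : A → G` of a finite abelian group compatible with a `G`-action,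
together with a nondegenerate, `G`-invariant, skewsymmetric bimultiplicative form `β` on
`Â = Hom(A, kˣ)`, defines a *unitary* universal R-matrix
`R = |A|⁻² Σ_{a,b∈A} Σ_{χ,ξ∈Â} β(χ,ξ) χ(a) ξ(b) (i(a) ⊗ i(b))` on `k[G]`. -/
theorem groupAlgebra_unitary_RMatrix_of_skew_form {k : Type*} [Field k] [IsAlgClosed k]
    [CharZero k] {G A : Type*} [Group G] [CommGroup A] [Fintype A]
    (i : A →* G) (hi : Function.Injective i) (hiN : i.range.Normal)
    (φ : G →* MulAut A)
    (hiφ : ∀ (g : G) (a : A), g * i a * g⁻¹ = i (φ g a))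
    (β : (A →* kˣ) → (A →* kˣ) → kˣ)
    (hβl : ∀ χ χ' ξ, β (χ * χ') ξ = β χ ξ * β χ' ξ)
    (hβr : ∀ χ ξ ξ', β χ (ξ * ξ') = β χ ξ * β χ ξ')
    (hβnd : ∀ χ : A →* kˣ, χ ≠ 1 → ∃ ξ, β χ ξ ≠ 1)
    (hβskew : ∀ χ ξ, β χ ξ * β ξ χ = 1)
    (hβG : ∀ (g : G) (χ ξ : A →* kˣ),
      β (χ.comp (φ g).toMonoidHom) (ξ.comp (φ g).toMonoidHom) = β χ ξ) :
    IsGroupRMatrix k G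
      (((Fintype.card A : k) ^ 2)⁻¹ •
        ∑ᶠ χ : A →* kˣ, ∑ᶠ ξ : A →* kˣ, ∑ a : A, ∑ b : A,
          ((β χ ξ : k) * (χ a : k) * (ξ b : k)) •
            (MonoidAlgebra.of k G (i a) ⊗ₜ[k] MonoidAlgebra.of k G (i b))) ∧
    (((Fintype.card A : k) ^ 2)⁻¹ •
        ∑ᶠ χ : A →* kˣ, ∑ᶠ ξ : A →* kˣ, ∑ a : A, ∑ b : A,
          ((β χ ξ : k) * (χ a : k) * (ξ b : k)) •
            (MonoidAlgebra.of k G (i a) ⊗ₜ[k] MonoidAlgebra.of k G (i b))) *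
      gτ k G (((Fintype.card A : k) ^ 2)⁻¹ •
        ∑ᶠ χ : A →* kˣ, ∑ᶠ ξ : A →* kˣ, ∑ a : A, ∑ b : A,
          ((β χ ξ : k) * (χ a : k) * (ξ b : k)) •
            (MonoidAlgebra.of k G (i a) ⊗ₜ[k] MonoidAlgebra.of k G (i b))) = 1 :=
  groupAlgebra_unitary_RMatrix_of_skew_form_general i φ hiφ β hβl hβr hβskew hβG

end
end

section
/- Let k be an algebraically closed field of characteristic zero, A a finite abelian group, and β : Â × Â → kˣ a bimultiplicative, nondegenerate, skewsymmetric form. Then there exists a unique element u ∈ A such that χ(u) = β(χ,χ) for every χ ∈ Â, and this element satisfies u² = 1. Moreover, if additionally A is embedded as a normal subgroup i : A → G of a group G via an injective homomorphism i, with a homomorphism φ : G → Aut(A) satisfying g·i(a)·g⁻¹ = i(φ_g(a)) for all g, a, and β is G-invariant (β(χ∘φ_g, ξ∘φ_g) = β(χ,ξ)), then i(u) is central in G. -/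
/-- For a nondegenerate skewsymmetric bimultiplicative form `β` on the character group
`Â = Hom(A, kˣ)` of a finite abelian group `A` over an algebraically closed field of
characteristic zero, there is a unique `u ∈ A` with `χ(u) = β(χ,χ)` for all `χ ∈ Â`;
it satisfies `u² = 1`, and whenever `A` is embedded as a normal subgroup `i : A → G`
compatibly with a `G`-action `φ` leaving `β` invariant, `i(u)` is central in `G`. -/
theorem exists_unique_markov_of_skew_form {k : Type*} [Field k] [IsAlgClosed k] [CharZero k]
    {A : Type*} [CommGroup A] [Fintype A]
    (β : (A →* kˣ) → (A →* kˣ) → kˣ)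
    (hβl : ∀ χ χ' ξ, β (χ * χ') ξ = β χ ξ * β χ' ξ)
    (hβr : ∀ χ ξ ξ', β χ (ξ * ξ') = β χ ξ * β χ ξ')
    (hβnd : ∀ χ : A →* kˣ, χ ≠ 1 → ∃ ξ, β χ ξ ≠ 1)
    (hβskew : ∀ χ ξ, β χ ξ * β ξ χ = 1) :
    ∃ u : A, (∀ χ : A →* kˣ, χ u = β χ χ) ∧
      (∀ v : A, (∀ χ : A →* kˣ, χ v = β χ χ) → v = u) ∧
      u ^ 2 = 1 ∧
      (∀ (G : Type*) [Group G] (i : A →* G), Function.Injective i → i.range.Normal →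
        ∀ (φ : G →* MulAut A), (∀ (g : G) (a : A), g * i a * g⁻¹ = i (φ g a)) →
        (∀ (g : G) (χ ξ : A →* kˣ),
          β (χ.comp (φ g).toMonoidHom) (ξ.comp (φ g).toMonoidHom) = β χ ξ) →
        ∀ g : G, g * i u = i u * g) := by
  classical
  have hexpA : NeZero ((Monoid.exponent A : k)) :=
    ⟨by exact_mod_cast Monoid.exponent_ne_zero_of_finite⟩
  -- characters separate points of A
  have hsep : ∀ a : A, a ≠ 1 → ∃ χ : A →* kˣ, χ a ≠ 1 := fun a ha =>
    CommGroup.exists_apply_ne_one_of_hasEnoughRootsOfUnity A k ha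
  have hsep' : ∀ a : A, (∀ χ : A →* kˣ, χ a = 1) → a = 1 := by
    intro a h
    by_contra ha
    obtain ⟨χ, hχ⟩ := hsep a ha
    exact hχ (h χ)
  -- the dual group is finite, of the same cardinality
  obtain ⟨eA⟩ := CommGroup.monoidHom_mulEquiv_of_hasEnoughRootsOfUnity A k
  have hfin : Finite (A →* kˣ) := Finite.of_equiv A eA.symm.toEquiv
  have hexpD : NeZero ((Monoid.exponent (A →* kˣ) : k)) :=
    ⟨Nat.cast_ne_zero.mpr (Monoid.exponent_ne_zero_of_finite (G := A →* kˣ))⟩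
  obtain ⟨eD⟩ := CommGroup.monoidHom_mulEquiv_of_hasEnoughRootsOfUnity (A →* kˣ) k
  -- the evaluation (double dual) map
  let E : A →* ((A →* kˣ) →* kˣ) :=
    { toFun := fun a =>
        { toFun := fun χ => χ a
          map_one' := rfl
          map_mul' := fun χ ξ => rfl }
      map_one' := by ext χ; simp
      map_mul' := fun a b => by ext χ; simp }
  have hEinj : Function.Injective E := by
    intro a b hab
    have h : ∀ χ : A →* kˣ, χ (a * b⁻¹) = 1 := by
      intro χ
      have : χ a = χ b := congrArg (fun f => f.toFun χ) hab
      simp [this]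
    exact mul_inv_eq_one.mp (hsep' _ h)
  have hEsurj : Function.Surjective E := by
    have e : A ≃ ((A →* kˣ) →* kˣ) := (eA.symm.trans eD.symm).toEquiv
    exact (Finite.injective_iff_surjective_of_equiv e).mp hEinj
  -- β(1, ξ) = 1
  have hβ1 : ∀ ξ, β 1 ξ = 1 := by
    intro ξ
    have h2 := hβl 1 1 ξ
    rw [show (1 : A →* kˣ) * 1 = 1 from mul_one (1 : A →* kˣ)] at h2
    exact left_eq_mul.mp h2
  -- the diagonal of β is a character of the dual group
  let q : (A →* kˣ) →* kˣ :=
    { toFun := fun χ => β χ χ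
      map_one' := hβ1 1
      map_mul' := by
        intro χ ξ
        show β (χ * ξ) (χ * ξ) = β χ χ * β ξ ξ
        rw [hβl, hβr, hβr, mul_assoc (β χ χ), ← mul_assoc (β χ ξ), hβskew χ ξ, one_mul] }
  obtain ⟨u, hu⟩ := hEsurj q
  have huχ : ∀ χ : A →* kˣ, χ u = β χ χ := fun χ =>
    congrArg (fun f => f.toFun χ) hu
  have huniq : ∀ v : A, (∀ χ : A →* kˣ, χ v = β χ χ) → v = u := by
    intro v hv
    have h : ∀ χ : A →* kˣ, χ (v * u⁻¹) = 1 := by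
      intro χ
      simp [hv χ, huχ χ]
    have := hsep' _ h
    exact mul_inv_eq_one.mp this
  refine ⟨u, huχ, huniq, ?_, ?_⟩
  · -- u ^ 2 = 1
    apply hsep'
    intro χ
    have : χ (u ^ 2) = β χ χ * β χ χ := by
      rw [map_pow, huχ χ, sq]
    rw [this, hβskew χ χ]
  · -- centrality
    intro G _ i hi _ φ hφ hinv g
    have hfix : φ g u = u := by
      apply huniq
      intro χ
      have := hinv g χ χ
      rw [← this]
      exact huχ (χ.comp (φ g).toMonoidHom)
    have h := hφ g u
    rw [hfix] at h
    calc g * i u = g * i u * g⁻¹ * g := by group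
    _ = i u * g := by rw [h]
end

section
/- Let k be a field, V a finite-dimensional k-vector space, n ≥ 1 an integer, and f : V → V a k-linear endomorphism. Let c : V^{⊗n} → V^{⊗n} be the cyclic permutation operator v₁⊗v₂⊗⋯⊗vₙ ↦ vₙ⊗v₁⊗⋯⊗v_{n−1}, and let f^{⊗n} : V^{⊗n} → V^{⊗n} be the n-fold tensor power of f. Then the trace of the composite c ∘ f^{⊗n} on V^{⊗n} equals the trace of fⁿ on V: Tr_{V^{⊗n}}(c ∘ f^{⊗n}) = Tr_V(fⁿ). -/
/-!
In a basis `(e_i)` of `V`, with `A` the matrix of `f`, the diagonal entry of `c ∘ f^{⊗n}` at the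
basis tensor `e_{p 0} ⊗ ⋯ ⊗ e_{p (n-1)}` is `∏ j, A (p (j + 1)) (p j)`. Summing over `p` is
summing over the closed walks of length `n` in the index set, weighted by `Aᵀ`, which gives
`tr ((Aᵀ)ⁿ) = tr (Aⁿ) = Tr (fⁿ)`.
-/

open scoped TensorProduct
open PiTensorProduct

namespace Matrix

variable {R ι : Type*} [CommSemiring R] [Fintype ι] [DecidableEq ι]

/-- Sum over walks `a, q 0, …, q (m - 1), c`: step `j` goes from `Fin.cons a q j` to
`Fin.snoc q c j`. -/
theorem pow_succ_apply_eq_sum_prod (A : Matrix ι ι R) (m : ℕ) (a c : ι) :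
    (A ^ (m + 1)) a c =
      ∑ q : Fin m → ι, ∏ j,
        A ((Fin.cons a q : Fin (m + 1) → ι) j) ((Fin.snoc q c : Fin (m + 1) → ι) j) := by
  induction m generalizing a with
  | zero => simp [Fin.snoc_zero]
  | succ m ih =>
    rw [pow_succ', mul_apply, ← (Fin.consEquiv fun _ => ι).sum_comp, Fintype.sum_prod_type]
    refine Finset.sum_congr rfl fun b _ => ?_
    rw [ih, Finset.mul_sum]
    refine Finset.sum_congr rfl fun q _ => ?_
    simp only [Fin.consEquiv, Equiv.coe_fn_mk]
    rw [← Fin.cons_snoc_eq_snoc_cons, Fin.prod_univ_succ (n := m + 1)]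
    simp only [Fin.cons_zero, Fin.cons_succ]

theorem trace_pow_eq_sum_prod_finRotate (A : Matrix ι ι R) {n : ℕ} (hn : n ≠ 0) :
    trace (A ^ n) = ∑ p : Fin n → ι, ∏ j, A (p j) (p (finRotate n j)) := by
  obtain ⟨m, rfl⟩ := Nat.exists_eq_succ_of_ne_zero hn
  rw [← (Fin.consEquiv fun _ => ι).sum_comp, Fintype.sum_prod_type]
  refine Finset.sum_congr rfl fun a _ => ?_
  rw [diag_apply, pow_succ_apply_eq_sum_prod]
  simp [Fin.consEquiv, Fin.snoc_eq_cons_rotate]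

end Matrix

theorem PiTensorProduct.trace_reindex_comp_map {R M ι κ : Type*} [CommSemiring R]
    [AddCommMonoid M] [Module R M] [Fintype ι] [DecidableEq ι] [Fintype κ] [DecidableEq κ]
    (b : Module.Basis κ R M) (e : Equiv.Perm ι) (f : ι → M →ₗ[R] M) :
    LinearMap.trace R (⨂[R] _ : ι, M)
        ((reindex R (fun _ : ι => M) e).toLinearMap ∘ₗ map f) =
      ∑ p : ι → κ, ∏ i, LinearMap.toMatrix b b (f i) (p (e i)) (p i) := by
  rw [LinearMap.trace_eq_matrix_trace R (Basis.piTensorProduct fun _ => b), Matrix.trace]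
  refine Finset.sum_congr rfl fun p _ => ?_
  rw [Matrix.diag_apply, LinearMap.toMatrix_apply, Basis.piTensorProduct_apply,
    LinearMap.comp_apply, map_tprod, LinearEquiv.coe_coe, reindex_tprod,
    Basis.piTensorProduct_repr_tprod_apply, ← Equiv.prod_comp e]
  simp only [Equiv.symm_apply_apply, LinearMap.toMatrix_apply]

/-- The trace of the cyclic permutation operator composed with the `n`-th tensor power of
an endomorphism `f` of a finite-dimensional vector space `V` equals the trace of `fⁿ`:
`Tr_{V^{⊗n}}(c ∘ f^{⊗n}) = Tr_V(fⁿ)`. -/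
theorem trace_cyclic_comp_tensorPow {k V : Type*} [Field k] [AddCommGroup V] [Module k V]
    [FiniteDimensional k V] (n : ℕ) (hn : 1 ≤ n) (f : V →ₗ[k] V) :
    LinearMap.trace k (⨂[k] _ : Fin n, V)
      (((PiTensorProduct.reindex k (fun _ : Fin n => V) (finRotate n)).toLinearMap :
          (⨂[k] _ : Fin n, V) →ₗ[k] ⨂[k] _ : Fin n, V) ∘ₗ
        PiTensorProduct.map (fun _ : Fin n => f)) =
      LinearMap.trace k V (f ^ n) := by
  classical
  let b := Module.finBasis k V
  rw [trace_reindex_comp_map b, LinearMap.trace_eq_matrix_trace k b, ← LinearMap.toMatrix_pow,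
    ← Matrix.trace_transpose, Matrix.transpose_pow,
    Matrix.trace_pow_eq_sum_prod_finRotate _ (by omega)]
  rfl
end
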